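/- arXiv:1510.05100 — 11 statements merged into one kernel-verified Lean document; each statement's English description precedes it below -/
import Mathlib

section
/- Let $K$ be a compact subset of a topological group $G$ and let $H$ be a discrete subgroup of $G$ that is closed in $G$. Then for every $n \in \mathbb{N}$ the set $\{x \in G : |K \cap Hx| \geq n\}$ is closed in $G$. -/
/-!
Write `K ∩ Sx` as the translate of `{s ∈ S | s x ∈ K}`. Removing this set `F` from the closed
discrete set `S` leaves a closed set, so `(S \ F)⁻¹ K` is closed and misses `x`; for `u` outside it,
every `s ∈ S` with `s u ∈ K` already lies in `F`. Hence `u ↦ |{s ∈ S | s u ∈ K}|` is upper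
semicontinuous, and it is finite because `S` meets the compact set `K x⁻¹` in a closed discrete set.
-/

open Set Filter Topology Pointwise

theorem natCard_inter_image_mul_right {G : Type*} [Group G] {S K : Set G} (x : G) :
    Nat.card ↥(K ∩ (fun s => s * x) '' S) = Nat.card ↥(S ∩ (· * x) ⁻¹' K) := by
  rw [inter_comm, ← image_inter_preimage, Nat.card_image_of_injective (mul_left_injective x)]

section

variable {G : Type*} [Group G] [TopologicalSpace G] [IsTopologicalGroup G]
  {S K : Set G}

theorem eventually_inter_preimage_mul_right_subset (hS : IsClosed S) (hSd : IsDiscrete S)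
    (hK : IsCompact K) (x : G) :
    ∀ᶠ u in 𝓝 x, S ∩ (· * u) ⁻¹' K ⊆ S ∩ (· * x) ⁻¹' K := by
  set C : Set G := (S \ (· * x) ⁻¹' K)⁻¹ * K
  have hC : IsClosed C :=
    (isClosed_of_subset_discrete_closed sdiff_subset hSd hS).inv.mul_right_of_isCompact hK
  have hxC : x ∉ C := by
    rintro ⟨a, ⟨-, ha⟩, k, hk, rfl⟩
    exact ha (by simpa using hk)
  filter_upwards [hC.isOpen_compl.mem_nhds hxC] with u hu s ⟨hs, hsu⟩
  refine ⟨hs, of_not_not fun hsx => hu ⟨s⁻¹, ?_, s * u, hsu, by group⟩⟩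
  simpa using And.intro hs hsx

theorem finite_inter_preimage_mul_right (hS : IsClosed S) (hSd : IsDiscrete S)
    (hK : IsCompact K) (x : G) : (S ∩ (· * x) ⁻¹' K).Finite :=
  ((Homeomorph.mulRight x).isCompact_preimage.mpr hK |>.inter_left hS).finite
    (hSd.mono inter_subset_left)

theorem upperSemicontinuous_natCard_inter_preimage_mul_right (hS : IsClosed S)
    (hSd : IsDiscrete S) (hK : IsCompact K) :
    UpperSemicontinuous fun x => Nat.card ↥(S ∩ (· * x) ⁻¹' K) := fun x _ hlt =>
  (eventually_inter_preimage_mul_right_subset hS hSd hK x).mono fun _ hsub =>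
    (Nat.card_mono (finite_inter_preimage_mul_right hS hSd hK x) hsub).trans_lt hlt

end

theorem stmt_3 {G : Type*} [Group G] [TopologicalSpace G] [IsTopologicalGroup G]
    (K : Set G) (hK : IsCompact K) (H : Subgroup G) (hH : DiscreteTopology H)
    (hHc : IsClosed (H : Set G)) (n : ℕ) :
    IsClosed {x : G | n ≤ Nat.card (K ∩ ((fun h => h * x) '' (H : Set G)) : Set G)} := by
  simp only [natCard_inter_image_mul_right]
  exact (upperSemicontinuous_natCard_inter_preimage_mul_right hHc
    (isDiscrete_iff_discreteTopology.mpr hH) hK).isClosed_preimage n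
end

section
/- Let $G$ be a topological group and let $A, B \subseteq G$ be compact subsets with $aA \cup bB \subseteq A \cup B$ and $aA \cap bB \subseteq c(A \cap B)$ for some $a, b, c \in G$. If the subgroup generated by $\{a, b, c\}$ is discrete, then $aA \cup bB = A \cup B$ and $aA \cap bB = c(A \cap B)$. -/
/-!
Let `H` be the subgroup generated by `a, b, c`. Each right coset `H x` is invariant under left
multiplication by `a, b, c`, and, `H` being discrete, it meets the compact sets `A` and `B` in
finite sets. On a coset the statement is therefore a counting argument: by inclusion–exclusion
`|aA ∪ bB| + |aA ∩ bB| = |A| + |B| = |A ∪ B| + |c(A ∩ B)|`, so neither inclusion can be strict.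
-/

open Pointwise MulAction

section Counting

variable {G α : Type*} [Group G] [MulAction G α] {A B : Set α} {a b c : G}

theorem smul_union_eq_and_smul_inter_eq_of_finite (hA : A.Finite) (hB : B.Finite)
    (h1 : a • A ∪ b • B ⊆ A ∪ B) (h2 : a • A ∩ b • B ⊆ c • (A ∩ B)) :
    a • A ∪ b • B = A ∪ B ∧ a • A ∩ b • B = c • (A ∩ B) := by
  have hsum : (a • A ∪ b • B).ncard + (a • A ∩ b • B).ncard
      = (A ∪ B).ncard + (c • (A ∩ B)).ncard := by
    rw [Set.ncard_union_add_ncard_inter _ _ hA.smul_set hB.smul_set, Set.ncard_smul_set,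
      Set.ncard_smul_set, Set.ncard_smul_set, Set.ncard_union_add_ncard_inter _ _ hA hB]
  have hU := Set.ncard_le_ncard h1 (hA.union hB)
  have hI := Set.ncard_le_ncard h2 (hA.inter_of_left B).smul_set
  exact ⟨Set.eq_of_subset_of_ncard_le h1 (by omega) (hA.union hB),
    Set.eq_of_subset_of_ncard_le h2 (by omega) (hA.inter_of_left B).smul_set⟩

theorem smul_union_eq_and_smul_inter_eq_of_finite_on_invariant_cover
    (hT : ∀ x, ∃ T : Set α, x ∈ T ∧ a • T = T ∧ b • T = T ∧ c • T = T ∧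
      (A ∩ T).Finite ∧ (B ∩ T).Finite)
    (h1 : a • A ∪ b • B ⊆ A ∪ B) (h2 : a • A ∩ b • B ⊆ c • (A ∩ B)) :
    a • A ∪ b • B = A ∪ B ∧ a • A ∩ b • B = c • (A ∩ B) := by
  suffices ∀ x, (x ∈ A ∪ B → x ∈ a • A ∪ b • B) ∧ (x ∈ c • (A ∩ B) → x ∈ a • A ∩ b • B) from
    ⟨h1.antisymm fun x hx ↦ (this x).1 hx, h2.antisymm fun x hx ↦ (this x).2 hx⟩
  intro x
  obtain ⟨T, hxT, ha, hb, hc, hAT, hBT⟩ := hT x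
  have hU : a • (A ∩ T) ∪ b • (B ∩ T) = (a • A ∪ b • B) ∩ T := by
    rw [Set.smul_set_inter, Set.smul_set_inter, ha, hb, Set.union_inter_distrib_right]
  have hI : a • (A ∩ T) ∩ b • (B ∩ T) = (a • A ∩ b • B) ∩ T := by
    rw [Set.smul_set_inter, Set.smul_set_inter, ha, hb, ← Set.inter_inter_distrib_right]
  have hU' : A ∩ T ∪ B ∩ T = (A ∪ B) ∩ T := (Set.union_inter_distrib_right ..).symm
  have hI' : c • (A ∩ T ∩ (B ∩ T)) = c • (A ∩ B) ∩ T := by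
    rw [← Set.inter_inter_distrib_right, Set.smul_set_inter, hc]
  obtain ⟨eU, eI⟩ := smul_union_eq_and_smul_inter_eq_of_finite hAT hBT
    (by rw [hU, hU']; exact Set.inter_subset_inter_left T h1)
    (by rw [hI, hI']; exact Set.inter_subset_inter_left T h2)
  rw [hU, hU'] at eU
  rw [hI, hI'] at eI
  exact ⟨fun hx ↦ (eU.symm.subset ⟨hx, hxT⟩).1, fun hx ↦ (eI.symm.subset ⟨hx, hxT⟩).1⟩

end Counting

theorem Subgroup.exists_nhds_one_inter_eq_one {G : Type*} [Group G] [TopologicalSpace G]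
    (H : Subgroup G) [DiscreteTopology H] : ∃ U ∈ nhds (1 : G), ∀ h ∈ H, h ∈ U → h = 1 := by
  obtain ⟨U, hUopen, hU⟩ := isOpen_induced_iff.mp (isOpen_discrete ({1} : Set H))
  have h1U : (1 : H) ∈ Subtype.val ⁻¹' U := hU ▸ rfl
  exact ⟨U, hUopen.mem_nhds h1U, fun h hh hhU ↦ congrArg Subtype.val
    (show (⟨h, hh⟩ : H) ∈ ({1} : Set H) from hU ▸ hhU)⟩

section DiscreteSubgroup

variable {G : Type*} [Group G] [TopologicalSpace G] [IsTopologicalGroup G] {K : Set G}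

theorem IsCompact.inter_subgroup_finite (hK : IsCompact K) (H : Subgroup G)
    [DiscreteTopology H] : (K ∩ H).Finite := by
  obtain ⟨U, hU, hUH⟩ := H.exists_nhds_one_inter_eq_one
  obtain ⟨V, hV, hVU⟩ := exists_nhds_split_inv hU
  obtain ⟨t, ht⟩ := compact_covered_by_mul_left_translates hK
    ⟨1, mem_interior_iff_mem_nhds.2 (inv_mem_nhds_one G hV)⟩
  -- if `g u, g v ∈ V⁻¹` then `u⁻¹ v = (g u)⁻¹ / (g v)⁻¹ ∈ U`
  have hpiece (g : G) : ((g * ·) ⁻¹' V⁻¹ ∩ H).Subsingleton := by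
    rintro u ⟨hu, huH⟩ v ⟨hv, hvH⟩
    have := hUH _ (H.mul_mem (H.inv_mem huH) hvH) (by simpa [mul_assoc] using hVU _ hu _ hv)
    exact inv_mul_eq_one.mp this
  refine (t.finite_toSet.biUnion fun g _ ↦ (hpiece g).finite).subset fun u ⟨huK, huH⟩ ↦ ?_
  obtain ⟨g, hg, hu⟩ := Set.mem_iUnion₂.mp (ht huK)
  exact Set.mem_iUnion₂.mpr ⟨g, hg, hu, huH⟩

theorem IsCompact.inter_orbit_finite (hK : IsCompact K) (H : Subgroup G)
    [DiscreteTopology H] (x : G) : (K ∩ orbit H x).Finite := by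
  have hfin := (hK.image (continuous_mul_const x⁻¹)).inter_subgroup_finite H
  refine (hfin.preimage (mul_left_injective x⁻¹).injOn).subset ?_
  rintro _ ⟨hyK, ⟨h, rfl⟩⟩
  exact ⟨⟨_, hyK, rfl⟩, by simp [Subgroup.smul_def]⟩

end DiscreteSubgroup

theorem stmt_5 {G : Type*} [Group G] [TopologicalSpace G] [IsTopologicalGroup G]
    (A B : Set G) (hA : IsCompact A) (hB : IsCompact B) (a b c : G)
    (hd : DiscreteTopology (Subgroup.closure {a, b, c}))
    (h1 : a • A ∪ b • B ⊆ A ∪ B) (h2 : a • A ∩ b • B ⊆ c • (A ∩ B)) :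
    a • A ∪ b • B = A ∪ B ∧ a • A ∩ b • B = c • (A ∩ B) := by
  set H := Subgroup.closure ({a, b, c} : Set G)
  have hinv {g : G} (hg : g ∈ ({a, b, c} : Set G)) (x : G) : g • orbit H x = orbit H x :=
    smul_orbit (⟨g, Subgroup.subset_closure hg⟩ : H) x
  exact smul_union_eq_and_smul_inter_eq_of_finite_on_invariant_cover
    (fun x ↦ ⟨orbit H x, mem_orbit_self x, hinv (by simp) x, hinv (by simp) x, hinv (by simp) x,
      hA.inter_orbit_finite H x, hB.inter_orbit_finite H x⟩) h1 h2
end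

section
/- Let $G$ be a topological group in which every 2-generated subgroup is discrete. Then $G$ is weakly 2-swelling: for all compact $A, B \subseteq G$ and $a, b \in G$ with $aA \cap bB = \emptyset$, the inclusion $aA \cup bB \subseteq A \cup B$ implies $aA \cup bB = A \cup B$ and $A \cap B = \emptyset$. -/
open Pointwise

/-! Discreteness of cyclic subgroups makes `G` Hausdorff, so the discrete subgroup
`H = ⟨a, b⟩` is closed and each right coset `H x` is closed and discrete; hence the compact
sets `A`, `B` meet every right coset in finitely many points. Left translation by `a` and `b`
preserves right cosets of `H`, so it suffices to argue on a single coset, where counting gives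
`|A ∪ B| ≤ |A| + |B| = |aA ∪ bB| ≤ |A ∪ B|`: equality throughout forces both claims. -/

theorem Set.smul_union_eq_and_inter_eq_empty_of_finite {G α : Type*} [Group G] [MulAction G α]
    {A B : Set α} (hA : A.Finite) (hB : B.Finite) {a b : G}
    (hdisj : a • A ∩ b • B = ∅) (hsub : a • A ∪ b • B ⊆ A ∪ B) :
    a • A ∪ b • B = A ∪ B ∧ A ∩ B = ∅ := by
  have hcard : (a • A ∪ b • B).ncard = A.ncard + B.ncard := by
    rw [Set.ncard_union_eq (Set.disjoint_iff_inter_eq_empty.2 hdisj) hA.smul_set hB.smul_set,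
      Set.ncard_smul_set, Set.ncard_smul_set]
  have heq : a • A ∪ b • B = A ∪ B :=
    Set.eq_of_subset_of_ncard_le hsub (hcard ▸ Set.ncard_union_le A B) (hA.union hB)
  refine ⟨heq, (Set.ncard_eq_zero (hA.inter_of_left B)).1 ?_⟩
  have := Set.ncard_union_add_ncard_inter A B hA hB
  rw [← heq, hcard] at this
  omega

theorem MulAction.smul_union_eq_and_inter_eq_empty_of_finite_inter_orbit
    {G α : Type*} [Group G] [MulAction G α] {H : Subgroup G} {A B : Set α}
    (hA : ∀ x, (A ∩ orbit H x).Finite) (hB : ∀ x, (B ∩ orbit H x).Finite)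
    {a b : G} (ha : a ∈ H) (hb : b ∈ H)
    (hdisj : a • A ∩ b • B = ∅) (hsub : a • A ∪ b • B ⊆ A ∪ B) :
    a • A ∪ b • B = A ∪ B ∧ A ∩ B = ∅ := by
  have smul_inter_orbit : ∀ c ∈ H, ∀ (S : Set α) x, c • (S ∩ orbit H x) = c • S ∩ orbit H x :=
    fun c hc S x => by
      rw [Set.smul_set_inter]
      congr 1
      exact smul_orbit (⟨c, hc⟩ : H) x
  have on_orbit x := Set.smul_union_eq_and_inter_eq_empty_of_finite (hA x) (hB x) (a := a) (b := b)
    (Set.subset_empty_iff.1 <| hdisj ▸ Set.inter_subset_inter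
      (Set.smul_set_mono Set.inter_subset_left) (Set.smul_set_mono Set.inter_subset_left))
    (by
      rw [smul_inter_orbit a ha, smul_inter_orbit b hb, ← Set.union_inter_distrib_right,
        ← Set.union_inter_distrib_right]
      exact Set.inter_subset_inter_left _ hsub)
  refine ⟨hsub.antisymm fun y hy => ?_, Set.eq_empty_of_forall_notMem fun y hy => ?_⟩
  · have hy' : y ∈ A ∩ orbit H y ∪ B ∩ orbit H y := by
      rw [← Set.union_inter_distrib_right]
      exact ⟨hy, mem_orbit_self y⟩
    rw [← (on_orbit y).1] at hy'
    exact Set.union_subset_union (Set.smul_set_mono Set.inter_subset_left)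
      (Set.smul_set_mono Set.inter_subset_left) hy'
  · have hy' : y ∈ A ∩ orbit H y ∩ (B ∩ orbit H y) :=
      ⟨⟨hy.1, mem_orbit_self y⟩, hy.2, mem_orbit_self y⟩
    rwa [(on_orbit y).2] at hy'

theorem IsCompact.finite_inter_orbit {G : Type*} [Group G] [TopologicalSpace G]
    [IsTopologicalGroup G] [T2Space G] {H : Subgroup G} [DiscreteTopology H] {S : Set G}
    (hS : IsCompact S) (x : G) : (S ∩ MulAction.orbit H x).Finite := by
  rw [orbit_subgroup_eq_rightCoset]
  have hclosed : IsClosed (MulOpposite.op x • (H : Set G)) :=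
    Subgroup.isClosed_of_discrete.smul _
  have hdisc : IsDiscrete (MulOpposite.op x • (H : Set G)) := by
    rw [← Set.image_smul]
    exact (isDiscrete_iff_discreteTopology.2 ‹_›).image (Homeomorph.mulRight x).isInducing
  exact (hS.inter_right hclosed).finite (hdisc.mono Set.inter_subset_right)

theorem IsTopologicalGroup.t2Space_of_discreteTopology_zpowers {G : Type*} [Group G]
    [TopologicalSpace G] [IsTopologicalGroup G]
    (h : ∀ x : G, DiscreteTopology (Subgroup.zpowers x)) : T2Space G := by
  -- topological groups are regular, and regular T0 spaces are Hausdorff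
  suffices T0Space G from inferInstance
  refine t0Space_iff_inseparable G |>.2 fun x y hxy => ?_
  have hspec : (1 : G) ⤳ (x / y) := by
    rw [specializes_iff_mem_closure, Set.singleton_one]
    exact group_inseparable_iff.1 hxy
  have hone : 1 = x / y := (isDiscrete_iff_discreteTopology.2 (h (x / y))).eq_of_specializes hspec
    (Subgroup.one_mem _) (Subgroup.mem_zpowers _)
  exact div_eq_one.1 hone.symm

theorem stmt_9 {G : Type*} [Group G] [TopologicalSpace G] [IsTopologicalGroup G]
    (hd : ∀ a b : G, DiscreteTopology (Subgroup.closure {a, b}))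
    (A B : Set G) (hA : IsCompact A) (hB : IsCompact B) (a b : G)
    (hdisj : a • A ∩ b • B = ∅) (h1 : a • A ∪ b • B ⊆ A ∪ B) :
    a • A ∪ b • B = A ∪ B ∧ A ∩ B = ∅ := by
  have : T2Space G := IsTopologicalGroup.t2Space_of_discreteTopology_zpowers fun x => by
    rw [Subgroup.zpowers_eq_closure, ← Set.pair_eq_singleton]
    exact hd x x
  have : DiscreteTopology (Subgroup.closure {a, b}) := hd a b
  exact MulAction.smul_union_eq_and_inter_eq_empty_of_finite_inter_orbit
    (H := Subgroup.closure {a, b}) hA.finite_inter_orbit hB.finite_inter_orbit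
    (Subgroup.subset_closure (by simp)) (Subgroup.subset_closure (by simp)) hdisj h1
end

section
/- If $h : G \to H$ is a continuous injective group homomorphism of topological groups and $H$ is 2-swelling, then $G$ is 2-swelling. -/
open Pointwise

def IsTwoSwelling (K : Type*) [Group K] [TopologicalSpace K] : Prop :=
  ∀ (A B : Set K), IsCompact A → IsCompact B → ∀ a b c : K,
    a • A ∪ b • B ⊆ A ∪ B → a • A ∩ b • B ⊆ c • (A ∩ B) →
      a • A ∪ b • B = A ∪ B ∧ a • A ∩ b • B = c • (A ∩ B)

theorem stmt_10_general {G H : Type*} [Group G] [TopologicalSpace G]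
    [Group H] [TopologicalSpace H]
    (h : G →* H) (hc : Continuous h) (hi : Function.Injective h)
    (hH : IsTwoSwelling H) : IsTwoSwelling G := by
  intro A B hA hB a b c hunion hinter
  have hH' := hH (h '' A) (h '' B) (hA.image hc) (hB.image hc) (h a) (h b) (h c)
  simp only [← Set.image_smul_distrib, ← Set.image_union, ← Set.image_inter hi] at hH'
  obtain ⟨hunion_eq, hinter_eq⟩ := hH' (Set.image_mono hunion) (Set.image_mono hinter)
  exact ⟨hi.image_injective hunion_eq, hi.image_injective hinter_eq⟩

theorem stmt_10 {G H : Type*} [Group G] [TopologicalSpace G] [IsTopologicalGroup G]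
    [Group H] [TopologicalSpace H] [IsTopologicalGroup H]
    (h : G →* H) (hc : Continuous h) (hi : Function.Injective h)
    (hH : IsTwoSwelling H) : IsTwoSwelling G :=
  stmt_10_general h hc hi hH
end

section
/- If $h : G \to H$ is a continuous injective group homomorphism of topological groups and $H$ is weakly 2-swelling, then $G$ is weakly 2-swelling. -/
open Pointwise

def IsWeaklyTwoSwelling (K : Type*) [Group K] [TopologicalSpace K] : Prop :=
  ∀ (A B : Set K), IsCompact A → IsCompact B → ∀ a b : K,
    a • A ∩ b • B = ∅ → a • A ∪ b • B ⊆ A ∪ B →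
      a • A ∪ b • B = A ∪ B ∧ A ∩ B = ∅

theorem stmt_11_general {G H : Type*} [Group G] [TopologicalSpace G]
    [Group H] [TopologicalSpace H]
    (h : G →* H) (hc : Continuous h) (hi : Function.Injective h)
    (hH : IsWeaklyTwoSwelling H) : IsWeaklyTwoSwelling G := by
  intro A B hA hB a b hdisj hsub
  have hdisj' : h a • h '' A ∩ h b • h '' B = ∅ := by
    rw [← Set.image_smul_distrib, ← Set.image_smul_distrib, ← Set.image_inter hi, hdisj,
      Set.image_empty]
  have hsub' : h a • h '' A ∪ h b • h '' B ⊆ h '' A ∪ h '' B := by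
    rw [← Set.image_smul_distrib, ← Set.image_smul_distrib, ← Set.image_union, ← Set.image_union]
    exact Set.image_mono hsub
  obtain ⟨hunion, hinter⟩ :=
    hH _ _ (hA.image hc) (hB.image hc) (h a) (h b) hdisj' hsub'
  refine ⟨Set.image_injective.mpr hi ?_, ?_⟩
  · rwa [Set.image_union, Set.image_union, Set.image_smul_distrib, Set.image_smul_distrib]
  · rwa [← Set.image_inter hi, Set.image_eq_empty] at hinter

theorem stmt_11 {G H : Type*} [Group G] [TopologicalSpace G] [IsTopologicalGroup G]
    [Group H] [TopologicalSpace H] [IsTopologicalGroup H]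
    (h : G →* H) (hc : Continuous h) (hi : Function.Injective h)
    (hH : IsWeaklyTwoSwelling H) : IsWeaklyTwoSwelling G :=
  stmt_11_general h hc hi hH
end

section
/- The additive group $\mathbb{Q}$ of rational numbers with its usual (subspace of $\mathbb{R}$) topology is 2-swelling: for all compact $A, B \subseteq \mathbb{Q}$ and $a, b, c \in \mathbb{Q}$, the inclusions $(a+A) \cup (b+B) \subseteq A \cup B$ and $(a+A) \cap (b+B) \subseteq c + (A \cap B)$ imply $(a+A) \cup (b+B) = A \cup B$ and $(a+A) \cap (b+B) = c + (A \cap B)$. -/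
open Set

/-- Finite counting lemma: the 2-swelling property for finite sets in any group. -/
lemma key_finite (A B : Set ℚ) (hA : A.Finite) (hB : B.Finite) (a b c : ℚ)
    (h1 : (fun x => a + x) '' A ∪ (fun x => b + x) '' B ⊆ A ∪ B)
    (h2 : (fun x => a + x) '' A ∩ (fun x => b + x) '' B ⊆ (fun x => c + x) '' (A ∩ B)) :
    (fun x => a + x) '' A ∪ (fun x => b + x) '' B = A ∪ B ∧
      (fun x => a + x) '' A ∩ (fun x => b + x) '' B = (fun x => c + x) '' (A ∩ B) := by
  have inja : Function.Injective (fun x : ℚ => a + x) := fun x y h => by simpa using h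
  have injb : Function.Injective (fun x : ℚ => b + x) := fun x y h => by simpa using h
  have injc : Function.Injective (fun x : ℚ => c + x) := fun x y h => by simpa using h
  have hA' : ((fun x => a + x) '' A).Finite := hA.image _
  have hB' : ((fun x => b + x) '' B).Finite := hB.image _
  have hABu : (A ∪ B).Finite := hA.union hB
  have hABi : (A ∩ B).Finite := hA.inter_of_left B
  have hCi : ((fun x => c + x) '' (A ∩ B)).Finite := hABi.image _
  -- cardinalities
  have e1 : ((fun x => a + x) '' A).ncard = A.ncard := ncard_image_of_injective A inja
  have e2 : ((fun x => b + x) '' B).ncard = B.ncard := ncard_image_of_injective B injb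
  have e3 : ((fun x => c + x) '' (A ∩ B)).ncard = (A ∩ B).ncard :=
    ncard_image_of_injective _ injc
  have IE1 : ((fun x => a + x) '' A ∪ (fun x => b + x) '' B).ncard
      + ((fun x => a + x) '' A ∩ (fun x => b + x) '' B).ncard
      = A.ncard + B.ncard := by
    rw [ncard_union_add_ncard_inter _ _ hA' hB', e1, e2]
  have IE2 : (A ∪ B).ncard + (A ∩ B).ncard = A.ncard + B.ncard :=
    ncard_union_add_ncard_inter _ _ hA hB
  have le1 : ((fun x => a + x) '' A ∪ (fun x => b + x) '' B).ncard ≤ (A ∪ B).ncard :=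
    ncard_le_ncard h1 hABu
  have le2 : ((fun x => a + x) '' A ∩ (fun x => b + x) '' B).ncard
      ≤ ((fun x => c + x) '' (A ∩ B)).ncard := ncard_le_ncard h2 hCi
  rw [e3] at le2
  constructor
  · exact eq_of_subset_of_ncard_le h1 (by omega) hABu
  · refine eq_of_subset_of_ncard_le h2 ?_ hCi
    rw [e3]; omega

theorem stmt_13 (A B : Set ℚ) (hA : IsCompact A) (hB : IsCompact B) (a b c : ℚ)
    (h1 : (fun x => a + x) '' A ∪ (fun x => b + x) '' B ⊆ A ∪ B)
    (h2 : (fun x => a + x) '' A ∩ (fun x => b + x) '' B ⊆ (fun x => c + x) '' (A ∩ B)) :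
    (fun x => a + x) '' A ∪ (fun x => b + x) '' B = A ∪ B ∧
      (fun x => a + x) '' A ∩ (fun x => b + x) '' B = (fun x => c + x) '' (A ∩ B) := by
  classical
  -- the common "grid" step
  set g : ℚ := 1 / ((a.den : ℚ) * b.den * c.den) with hg_def
  have hg_pos : 0 < g := by
    apply div_pos one_pos
    positivity
  -- a, b, c are integer multiples of g
  have hden : ∀ r : ℚ, ((r.den : ℚ)) ≠ 0 := fun r => by positivity
  have keyd : ∀ r : ℚ, r * (r.den : ℚ) = r.num := by
    intro r
    nth_rewrite 1 [← Rat.num_div_den r]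
    exact div_mul_cancel₀ _ (hden r)
  have hna' : a = ((a.num * b.den * c.den : ℤ) : ℚ) * g := by
    rw [hg_def, mul_one_div, eq_div_iff (by positivity)]
    push_cast
    linear_combination ((b.den : ℚ) * c.den) * keyd a
  have hnb' : b = ((b.num * a.den * c.den : ℤ) : ℚ) * g := by
    rw [hg_def, mul_one_div, eq_div_iff (by positivity)]
    push_cast
    linear_combination ((a.den : ℚ) * c.den) * keyd b
  have hnc' : c = ((c.num * a.den * b.den : ℤ) : ℚ) * g := by
    rw [hg_def, mul_one_div, eq_div_iff (by positivity)]
    push_cast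
    linear_combination ((a.den : ℚ) * b.den) * keyd c
  obtain ⟨na, hna⟩ : ∃ n : ℤ, a = (n : ℚ) * g := ⟨_, hna'⟩
  obtain ⟨nb, hnb⟩ : ∃ n : ℤ, b = (n : ℚ) * g := ⟨_, hnb'⟩
  obtain ⟨nc, hnc⟩ : ∃ n : ℤ, c = (n : ℚ) * g := ⟨_, hnc'⟩
  -- cosets
  set coset : ℚ → Set ℚ := fun x => {y | ∃ n : ℤ, y = x + n * g} with hcoset_def
  have coset_self : ∀ x, x ∈ coset x := fun x => ⟨0, by simp⟩
  have coset_add : ∀ (x y : ℚ) (n : ℤ), y ∈ coset x → (n : ℚ) * g + y ∈ coset x := by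
    rintro x y n ⟨m, rfl⟩
    exact ⟨n + m, by push_cast; ring⟩
  have coset_sub : ∀ (x y : ℚ) (n : ℤ), y ∈ coset x → y - (n : ℚ) * g ∈ coset x := by
    rintro x y n ⟨m, rfl⟩
    exact ⟨m - n, by push_cast; ring⟩
  -- bound on A ∪ B
  have hbound : ∃ q : ℚ, ∀ y ∈ A ∪ B, |y| ≤ q := by
    have h := (hA.union hB).isBounded
    rw [Metric.isBounded_iff_subset_closedBall 0] at h
    obtain ⟨r, hr⟩ := h
    obtain ⟨q, hq⟩ := exists_rat_gt r
    refine ⟨q, fun y hy => ?_⟩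
    have := hr hy
    simp only [Metric.mem_closedBall, Rat.dist_eq, sub_zero] at this
    have h2 : ((|y| : ℚ) : ℝ) ≤ (q : ℝ) := by
      rw [Rat.cast_abs]
      calc |(y : ℝ)| = |(y : ℝ) - ((0:ℚ):ℝ)| := by norm_num
        _ ≤ r := this
        _ ≤ q := hq.le
    exact_mod_cast h2
  obtain ⟨q, hq⟩ := hbound
  -- finiteness of coset slices
  have hfin : ∀ x : ℚ, ((A ∪ B) ∩ coset x).Finite := by
    intro x
    set m : ℤ := ⌈(q + |x|) / g⌉ with hm
    apply Set.Finite.subset (Set.Finite.image (fun n : ℤ => x + (n : ℚ) * g) (Set.finite_Icc (-m) m))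
    rintro y ⟨hy, n, rfl⟩
    refine ⟨n, ?_, rfl⟩
    have hb := hq _ hy
    have hn : |(n : ℚ)| * g ≤ q + |x| := by
      have habs : |(n : ℚ) * g| ≤ |x + n * g| + |x| := by
        calc |(n:ℚ) * g| = |(x + n * g) + (-x)| := by ring_nf
          _ ≤ |x + n * g| + |(-x)| := abs_add_le _ _
          _ = |x + n * g| + |x| := by rw [abs_neg]
      rw [abs_mul, abs_of_pos hg_pos] at habs
      linarith
    have hnq : |(n : ℚ)| ≤ (q + |x|) / g := by
      rw [le_div_iff₀ hg_pos]; exact hn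
    have hm' : |(n : ℚ)| ≤ (m : ℚ) := hnq.trans (by exact_mod_cast Int.le_ceil _)
    have hnm : |n| ≤ m := by exact_mod_cast (by rwa [← Int.cast_abs] at hm' : ((|n| : ℤ) : ℚ) ≤ m)
    have := abs_le.mp hnm
    exact Set.mem_Icc.mpr this
  -- per-coset statement
  have main : ∀ x : ℚ,
      (fun y => a + y) '' (A ∩ coset x) ∪ (fun y => b + y) '' (B ∩ coset x)
        = (A ∩ coset x) ∪ (B ∩ coset x) ∧
      (fun y => a + y) '' (A ∩ coset x) ∩ (fun y => b + y) '' (B ∩ coset x)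
        = (fun y => c + y) '' ((A ∩ coset x) ∩ (B ∩ coset x)) := by
    intro x
    have hAx : (A ∩ coset x).Finite := (hfin x).subset (fun y hy => ⟨Or.inl hy.1, hy.2⟩)
    have hBx : (B ∩ coset x).Finite := (hfin x).subset (fun y hy => ⟨Or.inr hy.1, hy.2⟩)
    have h1x : (fun y => a + y) '' (A ∩ coset x) ∪ (fun y => b + y) '' (B ∩ coset x)
        ⊆ (A ∩ coset x) ∪ (B ∩ coset x) := by
      rintro z (⟨u, ⟨huA, huc⟩, rfl⟩ | ⟨u, ⟨huB, huc⟩, rfl⟩)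
      · have hz : a + u ∈ A ∪ B := h1 (Or.inl ⟨u, huA, rfl⟩)
        have hzc : a + u ∈ coset x := by rw [hna]; exact coset_add x u na huc
        rcases hz with h | h
        · exact Or.inl ⟨h, hzc⟩
        · exact Or.inr ⟨h, hzc⟩
      · have hz : b + u ∈ A ∪ B := h1 (Or.inr ⟨u, huB, rfl⟩)
        have hzc : b + u ∈ coset x := by rw [hnb]; exact coset_add x u nb huc
        rcases hz with h | h
        · exact Or.inl ⟨h, hzc⟩
        · exact Or.inr ⟨h, hzc⟩
    have h2x : (fun y => a + y) '' (A ∩ coset x) ∩ (fun y => b + y) '' (B ∩ coset x)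
        ⊆ (fun y => c + y) '' ((A ∩ coset x) ∩ (B ∩ coset x)) := by
      rintro z ⟨⟨u, ⟨huA, huc⟩, hu⟩, ⟨v, ⟨hvB, hvc⟩, hv⟩⟩
      have hz : z ∈ (fun y => c + y) '' (A ∩ B) :=
        h2 ⟨⟨u, huA, hu⟩, ⟨v, hvB, hv⟩⟩
      obtain ⟨w, ⟨hwA, hwB⟩, hw⟩ := hz
      have hzc : z ∈ coset x := by
        rw [← hu, hna]; exact coset_add x u na huc
      have hwc : w ∈ coset x := by
        have : z - (nc : ℚ) * g ∈ coset x := coset_sub x z nc hzc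
        rwa [← hnc, ← hw, add_sub_cancel_left] at this
      exact ⟨w, ⟨⟨hwA, hwc⟩, ⟨hwB, hwc⟩⟩, hw⟩
    exact key_finite _ _ hAx hBx a b c h1x h2x
  constructor
  · refine subset_antisymm h1 (fun y hy => ?_)
    have hy' : y ∈ (A ∩ coset y) ∪ (B ∩ coset y) := by
      rcases hy with h | h
      · exact Or.inl ⟨h, coset_self y⟩
      · exact Or.inr ⟨h, coset_self y⟩
    rw [← (main y).1] at hy'
    rcases hy' with ⟨u, hu, hu'⟩ | ⟨u, hu, hu'⟩
    · exact Or.inl ⟨u, hu.1, hu'⟩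
    · exact Or.inr ⟨u, hu.1, hu'⟩
  · refine subset_antisymm h2 (fun y hy => ?_)
    obtain ⟨w, ⟨hwA, hwB⟩, hw⟩ := hy
    have hw' : c + w ∈ (fun z => c + z) '' ((A ∩ coset w) ∩ (B ∩ coset w)) :=
      ⟨w, ⟨⟨hwA, coset_self w⟩, ⟨hwB, coset_self w⟩⟩, rfl⟩
    rw [← (main w).2] at hw'
    obtain ⟨⟨u, hu, hu'⟩, ⟨v, hv, hv'⟩⟩ := hw'
    rw [← hw]
    exact ⟨⟨u, hu.1, hu'⟩, ⟨v, hv.1, hv'⟩⟩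
end

section
/- For every $n \in \mathbb{N}$, the additive topological group $\mathbb{R}^n$ is weakly 2-swelling: for all compact $A, B \subseteq \mathbb{R}^n$ and $a, b \in \mathbb{R}^n$ with $(a+A) \cap (b+B) = \emptyset$, the inclusion $(a+A) \cup (b+B) \subseteq A \cup B$ implies $(a+A) \cup (b+B) = A \cup B$ and $A \cap B = \emptyset$. -/
/-!
Let `S = A ∪ B`, `S' = (a + A) ∪ (b + B)` and `c = a - b`. Maximising a linear functional over `S`
shows `0 ∈ [a, b]`, so `a = t • c`. Let `u x` be the number of points of `S` on the coset
`x + ℤc`. Translating `a + A` back by `a` and `b + B` back by `b` maps `S'` on the coset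
`x + a + ℤc` onto `S` on `x + ℤc`, which gives
`u x + #(A ∩ B on x + ℤc) + #(S \ S' on x + a + ℤc) ≤ u (x + a)`.
So `u` is `c`-periodic and nondecreasing along `a`. As `S` is compact, `u` is finite and upper
semicontinuous, and since `-t` is a limit of numbers `k t + j` with `k ∈ ℕ`, `j ∈ ℤ`, also
`u (x + a) ≤ u x`. Hence both error terms vanish for every `x`: `A ∩ B = ∅` and `S ⊆ S'`.
-/

open Set

section CosetCount

variable {G : Type*}

noncomputable def cosetCount [AddGroup G] (S : Set G) (c x : G) : ℕ∞ :=
  {k : ℤ | x + k • c ∈ S}.encard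

theorem cosetCount_add_zsmul [AddGroup G] (S : Set G) (c x : G) (j : ℤ) :
    cosetCount S c (x + j • c) = cosetCount S c x := by
  have : {k : ℤ | x + j • c + k • c ∈ S} = (j + ·) ⁻¹' {k | x + k • c ∈ S} := by
    ext k
    simp [add_zsmul, add_assoc]
  rw [cosetCount, this, encard_preimage_of_bijective (AddGroup.addLeft_bijective j), cosetCount]

variable [AddCommGroup G] {A B : Set G} {a b : G}

theorem cosetCount_add_encard_inter_add_encard_diff_le
    (hdisj : (fun x => a + x) '' A ∩ (fun x => b + x) '' B = ∅)
    (h1 : (fun x => a + x) '' A ∪ (fun x => b + x) '' B ⊆ A ∪ B) (x : G) :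
    cosetCount (A ∪ B) (a - b) x + {k : ℤ | x + k • (a - b) ∈ A ∩ B}.encard
        + {k : ℤ | x + a + k • (a - b) ∈
            (A ∪ B) \ ((fun x => a + x) '' A ∪ (fun x => b + x) '' B)}.encard
      ≤ cosetCount (A ∪ B) (a - b) (x + a) := by
  set c := a - b
  set KA := {k : ℤ | x + k • c ∈ A}
  set KB := {k : ℤ | x + k • c ∈ B}
  set PA := {k : ℤ | x + a + k • c ∈ (fun x => a + x) '' A}
  set QB := {k : ℤ | x + a + k • c ∈ (fun x => b + x) '' B}
  set D := {k : ℤ | x + a + k • c ∈ (A ∪ B) \ ((fun x => a + x) '' A ∪ (fun x => b + x) '' B)}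
  have hPA : PA = KA := by
    ext k
    simp only [PA, KA, image_add_left, mem_preimage, mem_ofPred_eq]
    rw [show -a + (x + a + k • c) = x + k • c by abel]
  have hQB : QB = (· + 1) ⁻¹' KB := by
    ext k
    simp only [QB, KB, c, image_add_left, mem_preimage, mem_ofPred_eq]
    rw [show -b + (x + a + k • (a - b)) = x + (k + 1) • (a - b) by
      rw [add_zsmul, one_zsmul]; abel]
  have hPQ : Disjoint PA QB :=
    disjoint_left.mpr fun _ hkA hkB => (eq_empty_iff_forall_notMem.mp hdisj) _ ⟨hkA, hkB⟩
  have hD : Disjoint (PA ∪ QB) D := disjoint_left.mpr fun _ hk hkD => hkD.2 hk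
  have hsub : PA ∪ QB ∪ D ⊆ {k : ℤ | x + a + k • c ∈ A ∪ B} := by
    rintro k ((hk | hk) | hk)
    exacts [h1 (Or.inl hk), h1 (Or.inr hk), hk.1]
  calc cosetCount (A ∪ B) c x + {k : ℤ | x + k • c ∈ A ∩ B}.encard + D.encard
      = KA.encard + KB.encard + D.encard := by
        rw [cosetCount, ← encard_union_add_encard_inter KA KB]; rfl
    _ = (PA ∪ QB ∪ D).encard := by
        rw [encard_union_eq hD, encard_union_eq hPQ, hPA, hQB,
          encard_preimage_of_bijective (AddGroup.addRight_bijective 1)]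
    _ ≤ cosetCount (A ∪ B) c (x + a) := encard_le_encard hsub

theorem cosetCount_le_cosetCount_add_nsmul_add_zsmul
    (hdisj : (fun x => a + x) '' A ∩ (fun x => b + x) '' B = ∅)
    (h1 : (fun x => a + x) '' A ∪ (fun x => b + x) '' B ⊆ A ∪ B) (x : G) (k : ℕ) (j : ℤ) :
    cosetCount (A ∪ B) (a - b) x ≤ cosetCount (A ∪ B) (a - b) (x + k • a + j • (a - b)) := by
  rw [cosetCount_add_zsmul]
  induction k with
  | zero => simp
  | succ k ih =>
    rw [succ_nsmul, ← add_assoc]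
    exact ih.trans <| (le_self_add.trans le_self_add).trans <|
      cosetCount_add_encard_inter_add_encard_diff_le hdisj h1 _

end CosetCount

theorem neg_mem_closure_natCast_mul_add_intCast (t : ℝ) :
    -t ∈ closure {s | ∃ k : ℕ, ∃ j : ℤ, s = k * t + j} := by
  rw [Metric.mem_closure_iff]
  intro ε hε
  obtain ⟨N, hN⟩ := exists_nat_one_div_lt hε
  obtain ⟨j, q, hq, -, hqj⟩ := Real.exists_int_int_abs_mul_sub_le t N.succ_pos
  obtain ⟨k, hk⟩ := Int.eq_ofNat_of_zero_le (by omega : 0 ≤ q - 1)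
  have hkq : (k : ℝ) = q - 1 := by exact_mod_cast hk.symm
  refine ⟨k * t + (-j : ℤ), ⟨k, -j, rfl⟩, ?_⟩
  rw [Real.dist_eq, hkq]
  push_cast
  calc |-t - ((q - 1) * t + -j)| = |q * t - j| := by rw [← abs_neg]; ring_nf
    _ ≤ 1 / (N.succ + 1) := hqj
    _ ≤ 1 / (N + 1) := by gcongr; simp
    _ < ε := hN

section NormedSpace

variable {E : Type*} [NormedAddCommGroup E] [NormedSpace ℝ E]

theorem zero_mem_segment_of_image_add_union_subset {A B : Set E} (hS : IsCompact (A ∪ B))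
    (hne : (A ∪ B).Nonempty) {a b : E}
    (h : (fun x => a + x) '' A ∪ (fun x => b + x) '' B ⊆ A ∪ B) : (0 : E) ∈ segment ℝ a b := by
  by_contra h0
  have hseg : IsClosed (segment ℝ a b) := by
    rw [← convexHull_pair (𝕜 := ℝ)]
    exact ((toFinite {a, b}).isCompact_convexHull ℝ).isClosed
  obtain ⟨f, u, hf0, hfseg⟩ := geometric_hahn_banach_point_closed (convex_segment a b) hseg h0
  rw [map_zero] at hf0
  obtain ⟨x, hx, hmax⟩ := hS.exists_isMaxOn hne f.continuous.continuousOn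
  rcases hx with hxA | hxB
  · have : f (a + x) ≤ f x := hmax (h (Or.inl ⟨x, hxA, rfl⟩))
    linarith [map_add f a x, hfseg a (left_mem_segment ℝ a b)]
  · have : f (b + x) ≤ f x := hmax (h (Or.inr ⟨x, hxB, rfl⟩))
    linarith [map_add f b x, hfseg b (right_mem_segment ℝ a b)]

theorem locallyFinite_preimage_add_zsmul {S : Set E} (hS : Bornology.IsBounded S) {c : E}
    (hc : c ≠ 0) : LocallyFinite fun k : ℤ => (· + k • c) ⁻¹' S := by
  intro x
  obtain ⟨R, hR⟩ := hS.subset_closedBall 0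
  refine ⟨Metric.ball x 1, Metric.ball_mem_nhds x one_pos, ?_⟩
  refine ((isCompact_closedBall (0 : ℤ) ((R + ‖x‖ + 1) / ‖c‖)).finite_of_discrete).subset ?_
  rintro k ⟨y, hyS, hyx⟩
  have hy : ‖y + k • c‖ ≤ R := by simpa using hR hyS
  have hyx' : ‖y‖ < ‖x‖ + 1 := by
    rw [Metric.mem_ball, dist_eq_norm] at hyx
    linarith [norm_le_norm_add_norm_sub' y x]
  have hkc : ‖k • c‖ ≤ R + ‖x‖ + 1 :=
    calc ‖k • c‖ = ‖(y + k • c) - y‖ := by rw [add_sub_cancel_left]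
      _ ≤ ‖y + k • c‖ + ‖y‖ := norm_sub_le _ _
      _ ≤ R + ‖x‖ + 1 := by linarith
  rw [norm_zsmul ℝ, Real.norm_eq_abs, ← Int.norm_eq_abs] at hkc
  rwa [Metric.mem_closedBall, dist_zero_right, le_div_iff₀ (norm_pos_iff.mpr hc)]

theorem cosetCount_ne_top {S : Set E} (hS : Bornology.IsBounded S) {c : E} (hc : c ≠ 0) (x : E) :
    cosetCount S c x ≠ ⊤ :=
  encard_ne_top_iff.mpr ((locallyFinite_preimage_add_zsmul hS hc).point_finite x)

theorem upperSemicontinuous_cosetCount {S : Set E} (hS : IsCompact S) {c : E} (hc : c ≠ 0) :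
    UpperSemicontinuous (cosetCount S c) := fun x _ hm =>
  ((locallyFinite_preimage_add_zsmul hS.isBounded hc).eventually_subset
    (fun _ => hS.isClosed.preimage (continuous_add_const _)) x).mono
    fun _ hy => (encard_le_encard hy).trans_lt hm

variable {A B : Set E} {a b : E}

theorem cosetCount_add_eq_of_eq_smul_sub (hA : IsCompact A) (hB : IsCompact B) (hab : a ≠ b)
    {t : ℝ} (ht : a = t • (a - b))
    (hdisj : (fun x => a + x) '' A ∩ (fun x => b + x) '' B = ∅)
    (h1 : (fun x => a + x) '' A ∪ (fun x => b + x) '' B ⊆ A ∪ B) (x : E) :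
    cosetCount (A ∪ B) (a - b) (x + a) = cosetCount (A ∪ B) (a - b) x := by
  set c := a - b
  refine le_antisymm ?_ ((le_self_add.trans le_self_add).trans
    (cosetCount_add_encard_inter_add_encard_diff_le hdisj h1 x))
  have hF : IsClosed {y | cosetCount (A ∪ B) c (x + a) ≤ cosetCount (A ∪ B) c y} :=
    (upperSemicontinuous_cosetCount (hA.union hB) (sub_ne_zero.mpr hab)).isClosed_preimage _
  have hg : Continuous fun s : ℝ => x + a + s • c := by fun_prop
  have hmaps : MapsTo (fun s : ℝ => x + a + s • c) {s | ∃ k : ℕ, ∃ j : ℤ, s = k * t + j}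
      {y | cosetCount (A ∪ B) c (x + a) ≤ cosetCount (A ∪ B) c y} := by
    rintro _ ⟨k, j, rfl⟩
    have := cosetCount_le_cosetCount_add_nsmul_add_zsmul hdisj h1 (x + a) k j
    show _ ≤ cosetCount _ _ (x + a + ((k : ℝ) * t + j) • c)
    rwa [add_smul, mul_smul, ← ht, Nat.cast_smul_eq_nsmul, Int.cast_smul_eq_zsmul, ← add_assoc]
  have := hF.closure_subset (map_mem_closure hg (neg_mem_closure_natCast_mul_add_intCast t) hmaps)
  rwa [neg_smul, ← ht, add_neg_cancel_right] at this

theorem image_add_union_eq_and_inter_eq_empty_of_eq_smul_sub (hA : IsCompact A)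
    (hB : IsCompact B) (hab : a ≠ b) {t : ℝ} (ht : a = t • (a - b))
    (hdisj : (fun x => a + x) '' A ∩ (fun x => b + x) '' B = ∅)
    (h1 : (fun x => a + x) '' A ∪ (fun x => b + x) '' B ⊆ A ∪ B) :
    (fun x => a + x) '' A ∪ (fun x => b + x) '' B = A ∪ B ∧ A ∩ B = ∅ := by
  have hzero (x : E) :
      {k : ℤ | x + k • (a - b) ∈ A ∩ B} = ∅ ∧
        {k : ℤ | x + a + k • (a - b) ∈
          (A ∪ B) \ ((fun x => a + x) '' A ∪ (fun x => b + x) '' B)} = ∅ := by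
    have hle := cosetCount_add_encard_inter_add_encard_diff_le hdisj h1 x
    rw [cosetCount_add_eq_of_eq_smul_sub hA hB hab ht hdisj h1, add_assoc] at hle
    have hsum := nonpos_iff_eq_zero.mp <|
      (ENat.add_le_add_iff_left (cosetCount_ne_top (hA.union hB).isBounded
        (sub_ne_zero.mpr hab) x)).mp (hle.trans_eq (add_zero _).symm)
    rwa [add_eq_zero, encard_eq_zero, encard_eq_zero] at hsum
  refine ⟨h1.antisymm fun y hy => ?_, eq_empty_iff_forall_notMem.mpr fun z hz => ?_⟩
  · by_contra hy'
    have h0 : (0 : ℤ) ∈ {k : ℤ | y - a + a + k • (a - b) ∈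
        (A ∪ B) \ ((fun x => a + x) '' A ∪ (fun x => b + x) '' B)} := by
      rw [mem_ofPred_eq, zero_smul, add_zero, sub_add_cancel]
      exact ⟨hy, hy'⟩
    rwa [(hzero (y - a)).2] at h0
  · have h0 : (0 : ℤ) ∈ {k : ℤ | z + k • (a - b) ∈ A ∩ B} := by
      rwa [mem_ofPred_eq, zero_smul, add_zero]
    rwa [(hzero z).1] at h0

end NormedSpace

theorem stmt_15 (n : ℕ) (A B : Set (Fin n → ℝ)) (hA : IsCompact A) (hB : IsCompact B)
    (a b : Fin n → ℝ)
    (hdisj : (fun x => a + x) '' A ∩ (fun x => b + x) '' B = ∅)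
    (h1 : (fun x => a + x) '' A ∪ (fun x => b + x) '' B ⊆ A ∪ B) :
    (fun x => a + x) '' A ∪ (fun x => b + x) '' B = A ∪ B ∧ A ∩ B = ∅ := by
  rcases (A ∪ B).eq_empty_or_nonempty with hS | hS
  · obtain ⟨rfl, rfl⟩ := union_empty_iff.mp hS
    simp
  obtain ⟨s, t, -, -, hst, hsa⟩ := zero_mem_segment_of_image_add_union_subset (hA.union hB) hS h1
  have ht : a = t • (a - b) := by
    rw [← sub_eq_zero, ← hsa, eq_sub_of_add_eq hst]
    module
  rcases eq_or_ne a b with rfl | hab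
  · obtain rfl : a = 0 := by simpa using ht
    simpa only [zero_add, image_id', true_and] using hdisj
  exact image_add_union_eq_and_inter_eq_empty_of_eq_smul_sub hA hB hab ht hdisj h1
end

section
/- Every locally finite group, endowed with any Hausdorff group topology (in fact any group topology in which finite subgroups are discrete—for instance the discrete topology), satisfies: for all compact $A, B$ and elements $a, b, c$, the inclusions $aA \cup bB \subseteq A \cup B$ and $aA \cap bB \subseteq c(A \cap B)$ imply $aA \cup bB = A \cup B$ and $aA \cap bB = c(A \cap B)$. In particular, every locally finite topological group whose finite subgroups are discrete is 2-swelling. -/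
/-!
If `a`, `b`, `c` generate a finite subgroup `H`, every orbit of `H` is a finite set invariant
under `a`, `b` and `c`, so both inclusions restrict to the traces of `A` and `B` on a single
orbit. There they compare finite sets: translations preserve cardinality, so
`|aA ∪ bB| + |aA ∩ bB| = |A| + |B| = |A ∪ B| + |A ∩ B|`, and together with
`|aA ∩ bB| ≤ |c(A ∩ B)| = |A ∩ B|` this forces both inclusions to be equalities.
-/

open Pointwise MulAction

section

variable {G α : Type*} [Group G] [MulAction G α]

theorem smul_union_smul_eq_and_smul_inter_eq_of_finite {A B : Set α} (hA : A.Finite)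
    (hB : B.Finite) {a b c : G} (h1 : a • A ∪ b • B ⊆ A ∪ B) (h2 : a • A ∩ b • B ⊆ c • (A ∩ B)) :
    a • A ∪ b • B = A ∪ B ∧ a • A ∩ b • B = c • (A ∩ B) := by
  have hAB : (A ∩ B).Finite := hA.inter_of_left B
  have hsum : (a • A ∪ b • B).ncard + (a • A ∩ b • B).ncard = (A ∪ B).ncard + (A ∩ B).ncard := by
    rw [Set.ncard_union_add_ncard_inter _ _ hA.smul_set hB.smul_set, Set.ncard_smul_set,
      Set.ncard_smul_set, Set.ncard_union_add_ncard_inter _ _ hA hB]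
  have hinter : (a • A ∩ b • B).ncard ≤ (A ∩ B).ncard :=
    (Set.ncard_le_ncard h2 hAB.smul_set).trans_eq (Set.ncard_smul_set c _)
  have hunion : a • A ∪ b • B = A ∪ B :=
    Set.eq_of_subset_of_ncard_le h1 (by omega) (hA.union hB)
  refine ⟨hunion, Set.eq_of_subset_of_ncard_le h2 ?_ hAB.smul_set⟩
  rw [hunion] at hsum
  rw [Set.ncard_smul_set]
  omega

theorem smul_union_smul_inter_eq_and_smul_inter_inter_eq_of_smul_eq_self {A B K : Set α}
    (hA : (A ∩ K).Finite) (hB : (B ∩ K).Finite) {a b c : G}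
    (ha : a • K = K) (hb : b • K = K) (hc : c • K = K)
    (h1 : a • A ∪ b • B ⊆ A ∪ B) (h2 : a • A ∩ b • B ⊆ c • (A ∩ B)) :
    (a • A ∪ b • B) ∩ K = (A ∪ B) ∩ K ∧ (a • A ∩ b • B) ∩ K = c • (A ∩ B) ∩ K := by
  have hsa : a • (A ∩ K) = a • A ∩ K := by rw [Set.smul_set_inter, ha]
  have hsb : b • (B ∩ K) = b • B ∩ K := by rw [Set.smul_set_inter, hb]
  have hsc : c • (A ∩ K ∩ (B ∩ K)) = c • (A ∩ B) ∩ K := by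
    rw [← Set.inter_inter_distrib_right, Set.smul_set_inter, hc]
  have key := smul_union_smul_eq_and_smul_inter_eq_of_finite hA hB (a := a) (b := b) (c := c)
  rw [hsa, hsb, hsc, ← Set.union_inter_distrib_right, ← Set.union_inter_distrib_right,
    ← Set.inter_inter_distrib_right] at key
  exact key (Set.inter_subset_inter_left _ h1) (Set.inter_subset_inter_left _ h2)

theorem smul_union_smul_eq_and_smul_inter_eq_of_finite_orbits (H : Subgroup G)
    (hfin : ∀ x : α, (orbit H x).Finite) {a b c : G} (ha : a ∈ H) (hb : b ∈ H) (hc : c ∈ H)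
    (A B : Set α) (h1 : a • A ∪ b • B ⊆ A ∪ B) (h2 : a • A ∩ b • B ⊆ c • (A ∩ B)) :
    a • A ∪ b • B = A ∪ B ∧ a • A ∩ b • B = c • (A ∩ B) := by
  have hloc (x : α) := smul_union_smul_inter_eq_and_smul_inter_inter_eq_of_smul_eq_self
    ((hfin x).inter_of_right A) ((hfin x).inter_of_right B) (smul_orbit (⟨a, ha⟩ : H) x)
    (smul_orbit (⟨b, hb⟩ : H) x) (smul_orbit (⟨c, hc⟩ : H) x) h1 h2
  refine ⟨h1.antisymm fun x hx => ?_, h2.antisymm fun x hx => ?_⟩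
  · exact ((hloc x).1 ▸ ⟨hx, mem_orbit_self x⟩ : x ∈ (a • A ∪ b • B) ∩ orbit H x).1
  · exact ((hloc x).2 ▸ ⟨hx, mem_orbit_self x⟩ : x ∈ (a • A ∩ b • B) ∩ orbit H x).1

end

theorem stmt_16_general {G : Type*} [Group G]
    (hlf : ∀ S : Set G, S.Finite → ((Subgroup.closure S : Subgroup G) : Set G).Finite)
    (A B : Set G) (a b c : G)
    (h1 : a • A ∪ b • B ⊆ A ∪ B) (h2 : a • A ∩ b • B ⊆ c • (A ∩ B)) :
    a • A ∪ b • B = A ∪ B ∧ a • A ∩ b • B = c • (A ∩ B) := by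
  set H := Subgroup.closure {a, b, c}
  have : Finite H := (hlf _ (Set.toFinite _)).to_subtype
  exact smul_union_smul_eq_and_smul_inter_eq_of_finite_orbits H (fun x => Set.finite_range _)
    (Subgroup.subset_closure (by simp)) (Subgroup.subset_closure (by simp))
    (Subgroup.subset_closure (by simp)) A B h1 h2

theorem stmt_16 {G : Type*} [Group G] [TopologicalSpace G] [IsTopologicalGroup G]
    (hlf : ∀ S : Set G, S.Finite → ((Subgroup.closure S : Subgroup G) : Set G).Finite)
    (hfd : ∀ H : Subgroup G, (H : Set G).Finite → DiscreteTopology H)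
    (A B : Set G) (hA : IsCompact A) (hB : IsCompact B) (a b c : G)
    (h1 : a • A ∪ b • B ⊆ A ∪ B) (h2 : a • A ∩ b • B ⊆ c • (A ∩ B)) :
    a • A ∪ b • B = A ∪ B ∧ a • A ∩ b • B = c • (A ∩ B) :=
  stmt_16_general hlf A B a b c h1 h2
end

section
/- Let $G$ be a topological group, $A, B \subseteq G$ compact with $aA \cup bB \subseteq A \cup B$ and $aA \cap bB = \emptyset$ for some $a, b \in G$. If the cyclic subgroup $H_a$ generated by $a$ is closed and discrete in $G$, and $H_a$ is normal in the subgroup generated by $\{a, b\}$, then $aA \cup bB = A \cup B$ and $A \cap B = \emptyset$. -/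
/-!
Let `N = ⟨a⟩` and, for `S ⊆ A ∪ B`, let `f_S(w)` be the number of points of `S` in the right coset
`N w`; it is finite because the closed discrete subgroup `N` meets the compact set `(A ∪ B) w⁻¹` in
finitely many points. Since `a ∈ N` and `b` normalizes `N`, we have `a N w = N w` and
`b N w = N b w`, so counting the partition `A ∪ B = aA ⊔ bB ⊔ D`, `D = (A ∪ B) \ (aA ∪ bB)`, in the
coset `N b w` gives `f_B(b w) = f_B(w) + f_{A ∩ B}(b w) + f_D(b w)`.

Hence `f_B` does not decrease along `b`, and the theorem amounts to `f_B(b⁻¹ w) ≥ f_B(w)`. The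
superlevel sets `K_m = {w ∈ B | f_B(w) ≥ m}` are compact and satisfy `b K_m ⊆ N K_m`; a recurrence
argument (two points of the orbit `bⁿ x` modulo `N` come close in the compact set `b K_m`) upgrades
this to `K_m ⊆ N b K_m`, which is the reverse inequality. So `f_{A ∩ B}` and `f_D` vanish, i.e.
`A ∩ B = ∅` and `D = ∅`.
-/

open Pointwise Filter Topology MulOpposite Subgroup
open scoped RightActions

theorem IsDiscrete.finite_inter_of_isCompact {X : Type*} [TopologicalSpace X] {s L : Set X}
    (hd : IsDiscrete s) (hs : IsClosed s) (hL : IsCompact L) : (s ∩ L).Finite :=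
  (hL.inter_left hs).finite (hd.mono Set.inter_subset_left)

namespace Subgroup

variable {G : Type*} [Group G]

noncomputable def cosetCount (N : Subgroup G) (S : Set G) (w : G) : ℕ∞ :=
  (S ∩ (N : Set G) <• w).encard

variable {N : Subgroup G}

theorem cosetCount_eq_of_mem (S : Set G) {z w : G} (h : z ∈ (N : Set G) <• w) :
    cosetCount N S z = cosetCount N S w := by
  rw [cosetCount, cosetCount, (rightCoset_eq_iff N).2]
  simpa using inv_mem ((mem_rightCoset_iff w).1 h)

theorem smul_rightCoset_of_mem_normalizer {b : G} (hb : b ∈ normalizer N) (w : G) :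
    b • ((N : Set G) <• w) = (N : Set G) <• (b * w) := by
  ext x
  simp only [mem_leftCoset_iff, mem_rightCoset_iff, SetLike.mem_coe,
    (mem_normalizer_iff''.1 hb (x * (b * w)⁻¹))]
  group

theorem cosetCount_smul_mul_of_mem_normalizer {b : G} (hb : b ∈ normalizer N) (S : Set G)
    (w : G) : cosetCount N (b • S) (b * w) = cosetCount N S w := by
  rw [cosetCount, ← smul_rightCoset_of_mem_normalizer hb, ← Set.smul_set_inter,
    Set.encard_smul_set, cosetCount]

theorem cosetCount_smul_of_mem {a : G} (ha : a ∈ N) (S : Set G) (w : G) :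
    cosetCount N (a • S) w = cosetCount N S w := by
  have : a • ((N : Set G) <• w) = (N : Set G) <• w := by rw [smul_comm, smul_coe_set ha]
  rw [cosetCount, ← this, ← Set.smul_set_inter, Set.encard_smul_set, cosetCount]

theorem cosetCount_union {S T : Set G} (h : Disjoint S T) (w : G) :
    cosetCount N (S ∪ T) w = cosetCount N S w + cosetCount N T w := by
  rw [cosetCount, Set.union_inter_distrib_right,
    Set.encard_union_eq (h.mono Set.inter_subset_left Set.inter_subset_left)]
  rfl

theorem cosetCount_union_add_inter (S T : Set G) (w : G) :
    cosetCount N (S ∪ T) w + cosetCount N (S ∩ T) w = cosetCount N S w + cosetCount N T w := by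
  rw [cosetCount, cosetCount, Set.union_inter_distrib_right, Set.inter_inter_distrib_right,
    Set.encard_union_add_encard_inter]
  rfl

theorem cosetCount_eq_encard_inter (S : Set G) (w : G) :
    cosetCount N S w = ((N : Set G) ∩ S <• w⁻¹).encard := by
  rw [cosetCount, ← Set.encard_smul_set (op w) ((N : Set G) ∩ _), Set.smul_set_inter, op_inv,
    smul_inv_smul, Set.inter_comm]

theorem cosetCount_mul_eq {a b : G} (ha : a ∈ N) (hb : b ∈ normalizer N) {A B : Set G}
    (hsub : a • A ∪ b • B ⊆ A ∪ B) (hdisj : a • A ∩ b • B = ∅) {w : G}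
    (hA : cosetCount N A (b * w) ≠ ⊤) :
    cosetCount N B (b * w) = cosetCount N B w + cosetCount N (A ∩ B) (b * w) +
      cosetCount N ((A ∪ B) \ (a • A ∪ b • B)) (b * w) := by
  have hsplit : cosetCount N (A ∪ B) (b * w) = cosetCount N ((A ∪ B) \ (a • A ∪ b • B)) (b * w) +
      (cosetCount N A (b * w) + cosetCount N B w) := by
    rw [← Set.sdiff_union_of_subset hsub, cosetCount_union Set.disjoint_sdiff_left,
      Set.sdiff_union_of_subset hsub, cosetCount_union (Set.disjoint_iff_inter_eq_empty.2 hdisj),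
      cosetCount_smul_of_mem ha, cosetCount_smul_mul_of_mem_normalizer hb]
  have h := cosetCount_union_add_inter (N := N) A B (b * w)
  rw [hsplit] at h
  have h' : cosetCount N A (b * w) + cosetCount N B (b * w) = cosetCount N A (b * w) +
      (cosetCount N B w + cosetCount N (A ∩ B) (b * w) +
        cosetCount N ((A ∪ B) \ (a • A ∪ b • B)) (b * w)) := by
    rw [← h]; ring
  exact WithTop.add_left_cancel hA h'

theorem eq_empty_of_forall_cosetCount_eq_zero {S : Set G} (h : ∀ w, cosetCount N S w = 0) :
    S = ∅ :=
  Set.eq_empty_of_forall_notMem fun w hw =>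
    (Set.encard_eq_zero.1 (h w)).subset ⟨hw, (mem_rightCoset_iff w).2 (by simp)⟩

end Subgroup

section Topological

variable {G : Type*} [Group G] [TopologicalSpace G] [IsTopologicalGroup G]

theorem IsCompact.exists_lt_mul_inv_mem {K : Set G} (hK : IsCompact K) {c : ℕ → G}
    (hc : ∀ n, c n ∈ K) {U : Set G} (hU : U ∈ 𝓝 1) : ∃ m n, m < n ∧ c n * (c m)⁻¹ ∈ U := by
  obtain ⟨p, -, hp⟩ := hK.exists_mapClusterPt (f := atTop) (u := c)
    (tendsto_principal.2 (Eventually.of_forall hc))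
  have hcont : Tendsto (fun q : G × G => q.2 * q.1⁻¹) (𝓝 p ×ˢ 𝓝 p) (𝓝 1) := by
    simpa only [nhds_prod_eq, mul_inv_cancel] using
      (show Continuous fun q : G × G => q.2 * q.1⁻¹ by fun_prop).tendsto (p, p)
  obtain ⟨V, hV, hVU⟩ := mem_prod_self_iff.1 (hcont hU)
  have hfreq : ∃ᶠ n in atTop, c n ∈ V := hp.frequently hV
  obtain ⟨m, hm⟩ := hfreq.exists
  obtain ⟨n, hn, hmn⟩ := (hfreq.and_eventually (eventually_gt_atTop m)).exists
  exact ⟨m, n, hmn, hVU (Set.mk_mem_prod hm hn)⟩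

namespace Subgroup

variable {N : Subgroup G}

theorem t2Space_of_isClosed_of_isDiscrete (hN : IsClosed (N : Set G))
    (hd : IsDiscrete (N : Set G)) : T2Space G := by
  rw [IsTopologicalGroup.t2Space_iff_one_closed, ← closure_subset_iff_isClosed]
  intro z hz
  have hzN : z ∈ N := hN.closure_subset_iff.2 (by simp) hz
  exact (hd.eq_of_specializes (specializes_iff_mem_closure.2 hz) N.one_mem hzN).symm

theorem finite_inter_rightCoset (hN : IsClosed (N : Set G))
    (hd : IsDiscrete (N : Set G)) {L : Set G} (hL : IsCompact L) (w : G) :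
    (L ∩ (N : Set G) <• w).Finite := by
  have hfin : ((N : Set G) ∩ (· * w⁻¹) '' L).Finite :=
    hd.finite_inter_of_isCompact hN (hL.image (continuous_mul_const _))
  exact (hfin.preimage (mul_left_injective w⁻¹).injOn).subset
    fun x hx => ⟨(mem_rightCoset_iff _).1 hx.2, x, hx.1, rfl⟩

theorem subset_mul_smul_of_smul_subset_mul (hN : IsClosed (N : Set G))
    {b : G} (hb : b ∈ normalizer N) {K : Set G} (hK : IsCompact K)
    (hbK : b • K ⊆ (N : Set G) * K) : K ⊆ (N : Set G) * b • K := by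
  intro x hx
  have hconj : ∀ g ∈ normalizer N, ∀ ν ∈ N, g * ν * g⁻¹ ∈ N := fun g hg ν hν =>
    (mem_normalizer_iff.1 hg ν).1 hν
  have hpow : ∀ n : ℕ, ∃ ν ∈ N, ∃ c ∈ b • K, b ^ (n + 1) * x = ν * c := by
    intro n
    induction n with
    | zero => exact ⟨1, N.one_mem, b * x, Set.smul_mem_smul_set hx, by simp⟩
    | succ n ih =>
      obtain ⟨ν, hν, _, ⟨k, hk, rfl⟩, h⟩ := ih
      obtain ⟨μ, hμ, k', hk', hμk⟩ := hbK (Set.smul_mem_smul_set hk)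
      refine ⟨b * ν * b⁻¹ * (b * μ * b⁻¹), mul_mem (hconj b hb ν hν) (hconj b hb μ hμ), b * k',
        Set.smul_mem_smul_set hk', ?_⟩
      simp only [smul_eq_mul] at h hμk
      rw [pow_succ', mul_assoc, h, ← hμk]
      group
  choose ν hν c hc hνc using hpow
  have hc' : ∀ k, c k = (ν k)⁻¹ * (b ^ (k + 1) * x) := fun k => eq_inv_mul_of_mul_eq (hνc k).symm
  refine (hN.mul_right_of_isCompact (hK.smul b)).closure_subset
    (mem_closure_iff_nhds_one.2 fun U hU => ?_)
  obtain ⟨m, n, hmn, hcU⟩ := (hK.smul b).exists_lt_mul_inv_mem hc hU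
  obtain ⟨d, rfl⟩ := Nat.exists_eq_add_of_lt hmn
  -- `c n * (c m)⁻¹ * x` is close to `x`, and up to `N` it is `b ^ (n - m) * x ∈ N * b • K`.
  refine ⟨c (m + d + 1) * (c m)⁻¹ * x,
    ⟨(ν (m + d + 1))⁻¹ * (b ^ (d + 1) * ν m * (b ^ (d + 1))⁻¹) * ν d,
      mul_mem (mul_mem (inv_mem (hν _)) (hconj _ (pow_mem hb _) _ (hν m))) (hν d), c d, hc d, ?_⟩,
    by simpa [div_eq_mul_inv] using hcU⟩
  rw [hc' (m + d + 1), hc' m, hc' d]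
  group

theorem isCompact_setOf_le_cosetCount {B : Set G} (hΦ : ((N : Set G) ∩ (B * B⁻¹)).Finite)
    (hB : IsCompact B) (hBc : IsClosed B) (m : ℕ) :
    IsCompact {w ∈ B | (m : ℕ∞) ≤ cosetCount N B w} := by
  classical
  -- On `B`, the count is a finite sum of indicators of closed sets, hence upper semicontinuous.
  set Φ := hΦ.toFinset
  have hcount : ∀ w ∈ B, cosetCount N B w = (Φ.filter fun ν => ν * w ∈ B).card := by
    intro w hw
    rw [cosetCount_eq_encard_inter, ← Set.encard_coe_eq_coe_finsetCard]
    congr 1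
    ext ν
    simp only [Φ, Finset.coe_filter, Set.Finite.mem_toFinset, Set.mem_inter_iff,
      mem_rightCoset_iff, inv_inv, Set.mem_ofPred_eq]
    exact ⟨fun h => ⟨⟨h.1, ν * w, h.2, w⁻¹, Set.inv_mem_inv.2 hw, by group⟩, h.2⟩,
      fun h => ⟨h.1.1, h.2⟩⟩
  have husc : UpperSemicontinuous fun w => (Φ.filter fun ν => ν * w ∈ B).card := by
    simp only [Finset.card_filter]
    refine upperSemicontinuous_sum fun ν _ => ?_
    exact (hBc.preimage (continuous_const_mul ν)).upperSemicontinuous_indicator zero_le_one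
  have heq : {w ∈ B | (m : ℕ∞) ≤ cosetCount N B w} =
      B ∩ (fun w => (Φ.filter fun ν => ν * w ∈ B).card) ⁻¹' Set.Ici m := by
    ext w
    simp only [Set.mem_ofPred_eq, Set.mem_inter_iff, Set.mem_preimage, Set.mem_Ici]
    exact and_congr_right fun hw => by rw [hcount w hw, Nat.cast_le]
  rw [heq]
  exact hB.inter_right (husc.isClosed_preimage m)

theorem cosetCount_le_cosetCount_inv_mul (hN : IsClosed (N : Set G))
    (hd : IsDiscrete (N : Set G)) {b : G} (hb : b ∈ normalizer N) {B : Set G} (hB : IsCompact B)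
    (hmono : ∀ w, cosetCount N B w ≤ cosetCount N B (b * w)) (w : G) :
    cosetCount N B w ≤ cosetCount N B (b⁻¹ * w) := by
  have := t2Space_of_isClosed_of_isDiscrete hN hd
  rcases (B ∩ (N : Set G) <• w).eq_empty_or_nonempty with hempty | hne
  · simp [cosetCount, hempty]
  obtain ⟨z, hzB, hzw⟩ := hne
  have hm1 : 1 ≤ cosetCount N B w := Set.one_le_encard_iff_nonempty.2 ⟨z, hzB, hzw⟩
  lift cosetCount N B w to ℕ using (finite_inter_rightCoset hN hd hB w).encard_lt_top.ne
    with m hm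
  set K := {k ∈ B | (m : ℕ∞) ≤ cosetCount N B k}
  have hK : IsCompact K := isCompact_setOf_le_cosetCount
    (hd.finite_inter_of_isCompact hN (hB.mul hB.inv)) hB hB.isClosed m
  have hstep : b • K ⊆ (N : Set G) * K := by
    rintro _ ⟨k, hk, rfl⟩
    have hbk : (m : ℕ∞) ≤ cosetCount N B (b * k) := hk.2.trans (hmono k)
    obtain ⟨y, hyB, hyk⟩ := Set.one_le_encard_iff_nonempty.1 (hm1.trans hbk)
    refine ⟨b * k * y⁻¹, ?_, y, ⟨hyB, (cosetCount_eq_of_mem B hyk).symm ▸ hbk⟩, by simp⟩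
    simpa using inv_mem ((mem_rightCoset_iff _).1 hyk)
  have hzK : z ∈ K := ⟨hzB, hm.le.trans (cosetCount_eq_of_mem B hzw).ge⟩
  obtain ⟨ν, hν, _, ⟨k, hk, rfl⟩, hzk⟩ := subset_mul_smul_of_smul_subset_mul hN hb hK hstep hzK
  have hk' : k ∈ (N : Set G) <• (b⁻¹ * w) := by
    rw [← smul_rightCoset_of_mem_normalizer (inv_mem hb)]
    refine ⟨ν⁻¹ * z, ?_, ?_⟩
    · rw [mem_rightCoset_iff, mul_assoc]
      exact mul_mem (inv_mem hν) ((mem_rightCoset_iff w).1 hzw)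
    · simp [← hzk]
  calc (m : ℕ∞) ≤ cosetCount N B k := hk.2
    _ = cosetCount N B (b⁻¹ * w) := cosetCount_eq_of_mem B hk'

theorem smul_union_smul_eq_union_and_inter_eq_empty (hN : IsClosed (N : Set G))
    (hd : IsDiscrete (N : Set G)) {a b : G} (ha : a ∈ N) (hb : b ∈ normalizer N) {A B : Set G}
    (hA : IsCompact A) (hB : IsCompact B) (hsub : a • A ∪ b • B ⊆ A ∪ B)
    (hdisj : a • A ∩ b • B = ∅) : a • A ∪ b • B = A ∪ B ∧ A ∩ B = ∅ := by
  have hfin : ∀ {S}, S ⊆ A ∪ B → ∀ w, cosetCount N S w ≠ ⊤ := fun hS w =>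
    ((finite_inter_rightCoset hN hd (hA.union hB) w).subset
      (Set.inter_subset_inter_left _ hS)).encard_lt_top.ne
  have hcount := fun w => cosetCount_mul_eq ha hb hsub hdisj (hfin Set.subset_union_left (b * w))
  have hrev := cosetCount_le_cosetCount_inv_mul hN hd hb hB fun w => by
    rw [hcount w, add_assoc]
    exact le_self_add
  have hzero : ∀ w, cosetCount N (A ∩ B) w = 0 ∧
      cosetCount N ((A ∪ B) \ (a • A ∪ b • B)) w = 0 := by
    intro w
    have h := hcount (b⁻¹ * w)
    rw [mul_inv_cancel_left] at h
    have hle : cosetCount N B (b⁻¹ * w) + (cosetCount N (A ∩ B) w +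
        cosetCount N ((A ∪ B) \ (a • A ∪ b • B)) w) ≤ cosetCount N B (b⁻¹ * w) + 0 := by
      rw [add_zero, ← add_assoc, ← h]
      exact hrev w
    exact add_eq_zero.1 (nonpos_iff_eq_zero.1
      (WithTop.le_of_add_le_add_left (hfin Set.subset_union_right (b⁻¹ * w)) hle))
  exact ⟨hsub.antisymm (Set.sdiff_eq_empty.1 (eq_empty_of_forall_cosetCount_eq_zero
    fun w => (hzero w).2)), eq_empty_of_forall_cosetCount_eq_zero fun w => (hzero w).1⟩

end Subgroup

end Topological

theorem stmt_17 {G : Type*} [Group G] [TopologicalSpace G] [IsTopologicalGroup G]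
    (A B : Set G) (hA : IsCompact A) (hB : IsCompact B) (a b : G)
    (h1 : a • A ∪ b • B ⊆ A ∪ B) (hdisj : a • A ∩ b • B = ∅)
    (hclosed : IsClosed ((Subgroup.zpowers a : Subgroup G) : Set G))
    (hdisc : DiscreteTopology (Subgroup.zpowers a))
    (hnorm : ((Subgroup.zpowers a).subgroupOf (Subgroup.closure {a, b})).Normal) :
    a • A ∪ b • B = A ∪ B ∧ A ∩ B = ∅ := by
  have hb : b ∈ normalizer (zpowers a : Set G) :=
    le_normalizer_of_normal_subgroupOf (hK := hnorm) (zpowers_le.2 (subset_closure (by simp)))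
      (subset_closure (by simp))
  exact smul_union_smul_eq_union_and_inter_eq_empty hclosed
    (isDiscrete_iff_discreteTopology.2 hdisc) (mem_zpowers a) hb hA hB h1 hdisj
end

section
/- Let $A, B$ be nonempty compact subsets of $\mathbb{R}$ with $(a+A) \cup (b+B) \subseteq A \cup B$ for some nonzero reals $a, b$ such that $a/b$ is irrational. Then $A + b\mathbb{Z} = \mathbb{R}$ and $B + a\mathbb{Z} = \mathbb{R}$. -/
open Pointwise

lemma step_dense (d ε t : ℝ) (h0 : 0 < d) (hd : d < ε) :
    ∃ j : ℕ, ∃ m : ℤ, |(j : ℝ) * d + (m : ℝ) - t| < ε := by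
  refine ⟨⌈Int.fract t / d⌉₊, ⌊t⌋, ?_⟩
  have hfr0 : 0 ≤ Int.fract t := Int.fract_nonneg t
  have h1 : Int.fract t / d ≤ (⌈Int.fract t / d⌉₊ : ℝ) := Nat.le_ceil _
  have h2 : (⌈Int.fract t / d⌉₊ : ℝ) < Int.fract t / d + 1 :=
    Nat.ceil_lt_add_one (by positivity)
  have h1' : Int.fract t ≤ (⌈Int.fract t / d⌉₊ : ℝ) * d := (div_le_iff₀ h0).1 h1
  have hdm : Int.fract t / d * d = Int.fract t := div_mul_cancel₀ _ h0.ne'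
  have h2' : (⌈Int.fract t / d⌉₊ : ℝ) * d < Int.fract t + d := by
    nlinarith [mul_lt_mul_of_pos_right h2 h0]
  have hfl : ((⌊t⌋ : ℤ) : ℝ) = t - Int.fract t := by rw [Int.self_sub_fract]
  rw [hfl, abs_lt]
  constructor <;> nlinarith

lemma small_step (α : ℝ) (hα : Irrational α) (ε : ℝ) (hε : 0 < ε) :
    ∃ q : ℕ, 0 < q ∧ ∃ k : ℤ, (q : ℝ) * α - k ≠ 0 ∧ |(q : ℝ) * α - k| < ε := by
  obtain ⟨N, hN⟩ := exists_nat_gt (1 / ε)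
  have hN0 : 0 < N := by
    have h : (0 : ℝ) < N := lt_trans (by positivity) hN
    exact_mod_cast h
  have hNR : (0 : ℝ) < N := by exact_mod_cast hN0
  have main : ∀ p₁ p₂ : ℕ, p₁ < p₂ →
      ⌊Int.fract ((p₁ : ℝ) * α) * N⌋ = ⌊Int.fract ((p₂ : ℝ) * α) * N⌋ →
      ∃ q : ℕ, 0 < q ∧ ∃ k : ℤ, (q : ℝ) * α - k ≠ 0 ∧ |(q : ℝ) * α - k| < ε := by
    intro p₁ p₂ hlt heq
    refine ⟨p₂ - p₁, by omega, ⌊(p₂ : ℝ) * α⌋ - ⌊(p₁ : ℝ) * α⌋, ?_, ?_⟩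
    · intro h0
      apply hα
      refine ⟨((⌊(p₂ : ℝ) * α⌋ - ⌊(p₁ : ℝ) * α⌋ : ℤ) : ℚ) / ((p₂ - p₁ : ℕ) : ℚ), ?_⟩
      have hq0 : ((p₂ - p₁ : ℕ) : ℝ) ≠ 0 := by
        have : 0 < p₂ - p₁ := by omega
        positivity
      push_cast [Nat.cast_sub hlt.le] at h0 ⊢
      rw [div_eq_iff (by intro h; apply hq0; push_cast [Nat.cast_sub hlt.le]; linarith)]
      linarith [h0]
    · have hre : ((p₂ - p₁ : ℕ) : ℝ) * α - ((⌊(p₂ : ℝ) * α⌋ - ⌊(p₁ : ℝ) * α⌋ : ℤ) : ℝ)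
          = Int.fract ((p₂ : ℝ) * α) - Int.fract ((p₁ : ℝ) * α) := by
        rw [Int.fract, Int.fract]
        push_cast [Nat.cast_sub hlt.le]
        ring
      rw [hre]
      have habs := Int.abs_sub_lt_one_of_floor_eq_floor heq.symm
      have habs' : |Int.fract ((p₂ : ℝ) * α) - Int.fract ((p₁ : ℝ) * α)| * N < 1 := by
        calc |Int.fract ((p₂ : ℝ) * α) - Int.fract ((p₁ : ℝ) * α)| * N
            = |(Int.fract ((p₂ : ℝ) * α) - Int.fract ((p₁ : ℝ) * α)) * N| := by
              rw [abs_mul, abs_of_pos hNR]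
          _ = |Int.fract ((p₂ : ℝ) * α) * N - Int.fract ((p₁ : ℝ) * α) * N| := by
              rw [sub_mul]
          _ < 1 := habs
      have h1N : (1 : ℝ) / N < ε := by
        rw [div_lt_iff₀ hNR]
        have := (div_lt_iff₀ hε).1 hN
        linarith
      have := (lt_div_iff₀ hNR).2 habs'
      linarith
  have maps : ∀ p ∈ Finset.range (N + 1),
      ⌊Int.fract ((p : ℝ) * α) * N⌋ ∈ Finset.Ico (0 : ℤ) N := by
    intro p _
    rw [Finset.mem_Ico]
    constructor
    · exact Int.le_floor.2 (by push_cast; exact mul_nonneg (Int.fract_nonneg _) hNR.le)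
    · apply Int.floor_lt.2
      push_cast
      nlinarith [Int.fract_lt_one ((p : ℝ) * α), Int.fract_nonneg ((p : ℝ) * α)]
  have hcard : (Finset.Ico (0 : ℤ) (N : ℤ)).card < (Finset.range (N + 1)).card := by
    rw [Finset.card_range, Int.card_Ico]
    simp
  obtain ⟨p₁, _, p₂, _, hne, heq⟩ :=
    Finset.exists_ne_map_eq_of_card_lt_of_maps_to hcard maps
  rcases hne.lt_or_gt with h | h
  · exact main p₁ p₂ h heq
  · exact main p₂ p₁ h heq.symm

lemma nat_dense (α : ℝ) (hα : Irrational α) (t ε : ℝ) (hε : 0 < ε) :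
    ∃ p : ℕ, ∃ m : ℤ, |(p : ℝ) * α + (m : ℝ) - t| < ε := by
  obtain ⟨q, hq, k, hk0, hk⟩ := small_step α hα ε hε
  set d := (q : ℝ) * α - k with hd
  rcases hk0.lt_or_gt with hneg | hpos
  · obtain ⟨j, m, hm⟩ := step_dense (-d) ε (-t) (by linarith)
      (by rwa [abs_of_neg hneg] at hk)
    refine ⟨j * q, -(m + j * k), ?_⟩
    have he : ((j * q : ℕ) : ℝ) * α + ((-(m + j * k) : ℤ) : ℝ) - t
        = -((j : ℝ) * (-d) + (m : ℝ) - (-t)) := by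
      rw [hd]; push_cast; ring
    rw [he, abs_neg]; exact hm
  · obtain ⟨j, m, hm⟩ := step_dense d ε t hpos (by rwa [abs_of_pos hpos] at hk)
    refine ⟨j * q, m - j * k, ?_⟩
    have he : ((j * q : ℕ) : ℝ) * α + ((m - j * k : ℤ) : ℝ) - t
        = (j : ℝ) * d + (m : ℝ) - t := by
      rw [hd]; push_cast; ring
    rw [he]; exact hm

lemma key_lemma (A B : Set ℝ) (hA : IsCompact A) (x0 : ℝ) (hx0 : x0 ∈ A)
    (M : ℝ) (hM : ∀ x ∈ A ∪ B, |x| ≤ M)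
    (a b : ℝ) (hb : b ≠ 0) (hirr : Irrational (a / b))
    (hsA : ∀ x ∈ A, a + x ∈ A ∪ B) (hsB : ∀ x ∈ B, b + x ∈ A ∪ B) :
    A + Set.range (fun n : ℤ => b * n) = Set.univ := by
  classical
  set f : ℝ → ℝ := fun x => if x ∈ A then a + x else b + x with hf
  set y : ℕ → ℝ := fun n => f^[n] x0 with hy
  have hy0 : y 0 = x0 := rfl
  have hysucc : ∀ n, y (n + 1) = f (y n) := fun n => Function.iterate_succ_apply' f n x0
  have hmem : ∀ n, y n ∈ A ∪ B := by
    intro n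
    induction n with
    | zero => exact Or.inl hx0
    | succ n ih =>
      rw [hysucc]
      by_cases h : y n ∈ A
      · rw [hf]; simp only [h, if_true]; exact hsA _ h
      · have hB : y n ∈ B := ih.resolve_left h
        rw [hf]; simp only [h, if_false]; exact hsB _ hB
  have E : ∀ n, ∃ j : ℕ, y (n + j) ∈ A ∧ y (n + j) = y n + j * b := by
    intro n
    by_contra hcon
    push_neg at hcon
    have grow : ∀ j : ℕ, y (n + j) = y n + j * b ∧ y (n + j) ∉ A := by
      intro j
      induction j with
      | zero =>
        constructor
        · simp
        · intro hA'
          exact hcon 0 (by simpa using hA') (by simp)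
      | succ j ih =>
        have hBj : y (n + j) ∈ B := (hmem _).resolve_left ih.2
        have hstep : y (n + (j + 1)) = y n + ((j + 1 : ℕ) : ℝ) * b := by
          have hnn : n + (j + 1) = (n + j) + 1 := by ring
          rw [hnn, hysucc, hf]
          simp only [ih.2, if_false]
          rw [ih.1]; push_cast; ring
        refine ⟨hstep, fun hA' => hcon (j + 1) hA' hstep⟩
    obtain ⟨j, hj⟩ := exists_nat_gt ((M + |y n|) / |b|)
    have hb' : 0 < |b| := abs_pos.2 hb
    have h1 : |y (n + j)| ≤ M := hM _ (hmem _)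
    have h2 : y (n + j) = y n + j * b := (grow j).1
    have h4 : (j : ℝ) * |b| ≤ M + |y n| := by
      have e : (j : ℝ) * b = y (n + j) - y n := by rw [h2]; ring
      calc (j : ℝ) * |b| = |(j : ℝ) * b| := by rw [abs_mul, Nat.abs_cast]
        _ = |y (n + j) - y n| := by rw [e]
        _ ≤ |y (n + j)| + |y n| := by
            simpa [sub_eq_add_neg, abs_neg] using abs_add_le (y (n + j)) (-(y n))
        _ ≤ M + |y n| := by linarith
    have h5 : M + |y n| < (j : ℝ) * |b| := by
      rw [div_lt_iff₀ hb'] at hj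
      linarith
    linarith
  have V : ∀ p : ℕ, ∃ n : ℕ, ∃ m : ℤ, y n ∈ A ∧ y n = x0 + p * a + m * b := by
    intro p
    induction p with
    | zero =>
      obtain ⟨j, hjA, hje⟩ := E 0
      exact ⟨0 + j, j, hjA, by rw [hje, hy0]; push_cast; ring⟩
    | succ p ih =>
      obtain ⟨n, m, hnA, hne⟩ := ih
      have hstep : y (n + 1) = a + y n := by rw [hysucc, hf]; simp [hnA]
      obtain ⟨j, hjA, hje⟩ := E (n + 1)
      refine ⟨n + 1 + j, m + j, hjA, ?_⟩
      rw [hje, hstep, hne]; push_cast; ring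
  rw [Set.eq_univ_iff_forall]
  intro r
  by_contra hr
  have hZ : Set.range (fun n : ℤ => b * n) = (AddSubgroup.zmultiples b : Set ℝ) := by
    ext x
    simp only [Set.mem_range, SetLike.mem_coe, AddSubgroup.mem_zmultiples_iff, zsmul_eq_mul]
    exact ⟨fun ⟨n, hn⟩ => ⟨n, by rw [mul_comm]; exact hn⟩,
      fun ⟨n, hn⟩ => ⟨n, by rw [mul_comm]; exact hn⟩⟩
  have hclosed : IsClosed (A + Set.range (fun n : ℤ => b * n)) := by
    rw [hZ]
    exact IsClosed.add_left_of_isCompact AddSubgroup.isClosed_of_discrete hA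
  obtain ⟨ε, hε, hball⟩ := Metric.isOpen_iff.1 hclosed.isOpen_compl r hr
  have hbabs : 0 < |b| := abs_pos.2 hb
  obtain ⟨p, m, hpm⟩ := nat_dense (a / b) hirr ((r - x0) / b) (ε / |b|) (by positivity)
  obtain ⟨n, m', hnA, hne⟩ := V p
  have hx : x0 + p * a + m * b = y n + b * ((m - m' : ℤ) : ℝ) := by
    rw [hne]; push_cast; ring
  have hmem' : x0 + p * a + m * b ∈ A + Set.range (fun n : ℤ => b * n) := by
    rw [hx]
    exact Set.add_mem_add hnA ⟨m - m', rfl⟩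
  have hcalc : b * ((p : ℝ) * (a / b) + (m : ℝ) - (r - x0) / b)
      = x0 + p * a + m * b - r := by
    field_simp
    ring
  have hdist : |x0 + p * a + m * b - r| < ε := by
    rw [← hcalc, abs_mul]
    calc |b| * |(p : ℝ) * (a / b) + (m : ℝ) - (r - x0) / b|
        < |b| * (ε / |b|) := mul_lt_mul_of_pos_left hpm hbabs
      _ = ε := by field_simp
  exact hball (by rw [Metric.mem_ball, Real.dist_eq]; exact hdist) hmem'

theorem stmt_18 (A B : Set ℝ) (hAne : A.Nonempty) (hBne : B.Nonempty)
    (hA : IsCompact A) (hB : IsCompact B) (a b : ℝ) (ha : a ≠ 0) (hb : b ≠ 0)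
    (hirr : Irrational (a / b))
    (h1 : (fun x => a + x) '' A ∪ (fun x => b + x) '' B ⊆ A ∪ B) :
    A + Set.range (fun n : ℤ => b * n) = Set.univ ∧
      B + Set.range (fun n : ℤ => a * n) = Set.univ := by
  obtain ⟨M, hM⟩ := (hA.union hB).isBounded.exists_norm_le
  have hM' : ∀ x ∈ A ∪ B, |x| ≤ M := fun x hx => by
    simpa [Real.norm_eq_abs] using hM x hx
  obtain ⟨x0, hx0⟩ := hAne
  obtain ⟨y0, hy0⟩ := hBne
  have hsA : ∀ x ∈ A, a + x ∈ A ∪ B := fun x hx => h1 (Or.inl ⟨x, hx, rfl⟩)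
  have hsB : ∀ x ∈ B, b + x ∈ A ∪ B := fun x hx => h1 (Or.inr ⟨x, hx, rfl⟩)
  have hirr' : Irrational (b / a) := by
    rintro ⟨q, hq⟩
    apply hirr
    exact ⟨q⁻¹, by rw [Rat.cast_inv, hq, inv_div]⟩
  constructor
  · exact key_lemma A B hA x0 hx0 M hM' a b hb hirr hsA hsB
  · refine key_lemma B A hB y0 hy0 M (fun x hx => hM' x ?_) b a ha hirr'
      (fun x hx => ?_) (fun x hx => ?_)
    · rwa [Set.union_comm]
    · rw [Set.union_comm]; exact hsB x hx
    · rw [Set.union_comm]; exact hsA x hx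
end

section
/- Let $A, B$ be nonempty compact subsets of $\mathbb{R}$ with $(a+A) \cup (b+B) \subseteq A \cup B$ for some nonzero reals $a, b$ with $a/b$ irrational. Then $A$ and $B$ each have positive Lebesgue measure. -/
open MeasureTheory Set Pointwise

private lemma exists_int_mul_le' (b c : ℝ) (hb : b ≠ 0) : ∃ j : ℤ, (j : ℝ) * b ≤ c := by
  rcases hb.lt_or_gt with h | h
  · exact ⟨⌈c / b⌉, (div_le_iff_of_neg h).mp (Int.le_ceil _)⟩
  · exact ⟨⌊c / b⌋, (le_div_iff₀ h).mp (Int.floor_le _)⟩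

private lemma exists_le_int_mul' (b c : ℝ) (hb : b ≠ 0) : ∃ j : ℤ, c ≤ (j : ℝ) * b := by
  obtain ⟨j, hj⟩ := exists_int_mul_le' (-b) (-c) (neg_ne_zero.mpr hb)
  exact ⟨j, by nlinarith⟩

private lemma dense_subgroup' (a b : ℝ) (hirr : Irrational (a / b)) :
    Dense ((AddSubgroup.closure {a, b} : AddSubgroup ℝ) : Set ℝ) := by
  have hb : b ≠ 0 := by
    rintro rfl
    exact (Rat.not_irrational 0) (by simpa using hirr)
  rcases (AddSubgroup.closure {a, b}).dense_or_cyclic with h | ⟨g, hg⟩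
  · exact h
  · exfalso
    have hbmem : b ∈ AddSubgroup.closure ({a, b} : Set ℝ) :=
      AddSubgroup.subset_closure (by simp)
    have hamem : a ∈ AddSubgroup.closure ({a, b} : Set ℝ) :=
      AddSubgroup.subset_closure (by simp)
    rw [hg] at hamem hbmem
    obtain ⟨m, hm⟩ := AddSubgroup.mem_closure_singleton.mp hamem
    obtain ⟨n, hn⟩ := AddSubgroup.mem_closure_singleton.mp hbmem
    have hg0 : g ≠ 0 := by rintro rfl; simp at hn; exact hb hn.symm
    have hn0 : (n : ℝ) ≠ 0 := by rintro h; rw [zsmul_eq_mul, h, zero_mul] at hn; exact hb hn.symm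
    refine hirr ⟨(m : ℚ) / (n : ℚ), ?_⟩
    rw [← hm, ← hn, zsmul_eq_mul, zsmul_eq_mul, mul_div_mul_right _ _ hg0]
    push_cast
    rfl

private lemma exists_small' (a b : ℝ) (hirr : Irrational (a / b)) {ε : ℝ} (hε : 0 < ε) :
    ∃ (p : ℕ) (q : ℤ), 0 < |(p : ℝ) * a + q * b| ∧ |(p : ℝ) * a + q * b| < ε := by
  have hd := dense_subgroup' a b hirr
  obtain ⟨s, hsS, hs⟩ := hd.exists_mem_open isOpen_Ioo (nonempty_Ioo.mpr hε)
  obtain ⟨m, n, hmn⟩ := AddSubgroup.mem_closure_pair.mp hsS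
  have hs1 : (0:ℝ) < s := hs.1
  have hs2 : s < ε := hs.2
  rcases le_or_gt 0 m with hm | hm
  · have hc : ((m.toNat : ℕ) : ℝ) = (m : ℝ) := by exact_mod_cast Int.toNat_of_nonneg hm
    have hv : ((m.toNat : ℕ) : ℝ) * a + ((n : ℤ) : ℝ) * b = s := by
      rw [hc, ← hmn, zsmul_eq_mul, zsmul_eq_mul]
    refine ⟨m.toNat, n, ?_, ?_⟩ <;> rw [hv, abs_of_pos hs1] <;> linarith
  · have hc : (((-m).toNat : ℕ) : ℝ) = -(m : ℝ) := by
      exact_mod_cast Int.toNat_of_nonneg (by linarith : (0:ℤ) ≤ -m)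
    have hv : (((-m).toNat : ℕ) : ℝ) * a + ((-n : ℤ) : ℝ) * b = -s := by
      rw [hc, ← hmn, zsmul_eq_mul, zsmul_eq_mul]; push_cast; ring
    refine ⟨(-m).toNat, -n, ?_, ?_⟩ <;> rw [hv, abs_neg, abs_of_pos hs1] <;> linarith

/-- Density of `{x0 + M*a + k*b : M ∈ ℕ, k ∈ ℤ}` in `ℝ`. -/
private lemma dense_orbit' (a b : ℝ) (hb : b ≠ 0) (hirr : Irrational (a / b)) (x0 t : ℝ)
    {ε : ℝ} (hε : 0 < ε) :
    ∃ (M : ℕ) (k : ℤ), |x0 + (M : ℝ) * a + (k : ℝ) * b - t| < ε := by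
  obtain ⟨p, q, hd0, hdε⟩ := exists_small' a b hirr hε
  set d : ℝ := (p : ℝ) * a + q * b with hd
  have hdne : d ≠ 0 := by intro h; rw [h] at hd0; simp at hd0
  set τ : ℝ := t - x0 with hτ
  -- choose j with (τ - j*b)/d ≥ 0
  have hj : ∃ j : ℤ, 0 ≤ (τ - (j : ℝ) * b) / d := by
    rcases hdne.lt_or_gt with hdneg | hdpos
    · obtain ⟨j, hjle⟩ := exists_le_int_mul' b τ hb
      exact ⟨j, div_nonneg_iff.mpr (Or.inr ⟨by linarith, hdneg.le⟩)⟩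
    · obtain ⟨j, hjle⟩ := exists_int_mul_le' b τ hb
      exact ⟨j, div_nonneg (by linarith) hdpos.le⟩
  obtain ⟨j, hjnn⟩ := hj
  set u : ℝ := τ - (j : ℝ) * b with hu
  set n : ℤ := ⌊u / d⌋ with hn
  have hn0 : 0 ≤ n := Int.floor_nonneg.mpr hjnn
  have h1 : (n : ℝ) ≤ u / d := Int.floor_le _
  have h2 : u / d < n + 1 := Int.lt_floor_add_one _
  have key : |u - (n : ℝ) * d| < ε := by
    have : u - (n:ℝ) * d = d * (u / d - n) := by field_simp
    rw [this, abs_mul]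
    calc |d| * |u / d - (n:ℝ)| ≤ |d| * 1 := by
          apply mul_le_mul_of_nonneg_left _ (abs_nonneg d)
          rw [abs_le]; constructor <;> linarith
      _ = |d| := mul_one _
      _ < ε := hdε
  refine ⟨p * n.toNat, n * q + j, ?_⟩
  have hcast : ((n.toNat : ℝ)) = (n : ℝ) := by
    exact_mod_cast congrArg (Int.cast : ℤ → ℝ) (Int.toNat_of_nonneg hn0)
  have : x0 + ((p * n.toNat : ℕ) : ℝ) * a + ((n * q + j : ℤ) : ℝ) * b - t
      = (n : ℝ) * d - u := by
    push_cast [hcast]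
    rw [hd, hu, hτ]; ring
  rw [this, abs_sub_comm]
  exact key

/-- If a compact set contains a point `≡ x0 + M*a (mod b)` for every `M : ℕ`, then
it has positive measure. -/
private lemma key_measure' (A : Set ℝ) (hA : IsCompact A) (a b x0 : ℝ) (hb : b ≠ 0)
    (hirr : Irrational (a / b))
    (hpts : ∀ M : ℕ, ∃ k : ℤ, x0 + (M : ℝ) * a + (k : ℝ) * b ∈ A) :
    0 < volume A := by
  set E : Set ℝ := A + ((AddSubgroup.zmultiples b : AddSubgroup ℝ) : Set ℝ) with hE
  have hEclosed : IsClosed E :=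
    IsClosed.add_left_of_isCompact (AddSubgroup.isClosed_of_discrete) hA
  have hEdense : Dense E := by
    rw [Metric.dense_iff]
    intro t ε hε
    obtain ⟨M, k, hMk⟩ := dense_orbit' a b hb hirr x0 t hε
    obtain ⟨k', hk'⟩ := hpts M
    refine ⟨x0 + (M : ℝ) * a + (k : ℝ) * b, ?_, ?_⟩
    · rw [Metric.mem_ball, Real.dist_eq]; exact hMk
    · refine ⟨x0 + (M : ℝ) * a + (k' : ℝ) * b, hk',
        ((k - k' : ℤ) : ℝ) * b, ?_, by push_cast; ring⟩
      rw [← zsmul_eq_mul]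
      exact zsmul_mem (AddSubgroup.mem_zmultiples b) (k - k')
  have hEuniv : E = univ := hEclosed.closure_eq ▸ hEdense.closure_eq
  rw [pos_iff_ne_zero]
  intro h0
  have hEnull : volume E = 0 := by
    have : E ⊆ ⋃ k : ℤ, ((k : ℝ) * b) +ᵥ A := by
      rintro y ⟨u, hu, v, hv, rfl⟩
      obtain ⟨k, hk⟩ := AddSubgroup.mem_zmultiples_iff.mp hv
      exact mem_iUnion.mpr ⟨k, ⟨u, hu, by rw [← hk]; simp [zsmul_eq_mul]; ring⟩⟩
    refine measure_mono_null this (measure_iUnion_null fun k => ?_)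
    rw [measure_vadd]
    exact h0
  rw [hEuniv] at hEnull
  simp [Real.volume_univ] at hEnull

private lemma counter_lemma' (c : ℕ → ℕ) (p : ℕ → Prop) [DecidablePred p] (h0 : c 0 = 0)
    (hstep : ∀ n, c (n + 1) = c n + (if p n then 1 else 0))
    (hinf : ∀ N : ℕ, ∃ t : ℕ, p (N + t)) :
    ∀ M : ℕ, ∃ n, p n ∧ c n = M := by
  classical
  have reach : ∀ n M, c n = M → ∃ n', p n' ∧ c n' = M := by
    intro n M hc
    have hex := hinf n
    have hconst : ∀ s, s ≤ Nat.find hex → c (n + s) = M := by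
      intro s hs
      induction s with
      | zero => simpa using hc
      | succ k ih =>
        have hk : ¬ p (n + k) := Nat.find_min hex (by omega)
        rw [show n + (k + 1) = (n + k) + 1 by ring, hstep, if_neg hk, ih (by omega)]
        omega
    exact ⟨n + Nat.find hex, Nat.find_spec hex, hconst _ le_rfl⟩
  intro M
  induction M with
  | zero => exact reach 0 0 h0
  | succ M ih =>
    obtain ⟨n, hp, hc⟩ := ih
    exact reach (n + 1) (M + 1) (by rw [hstep, if_pos hp, hc])

private lemma orbit_pts' (A B : Set ℝ) (a b : ℝ) (ha : a ≠ 0) (hb : b ≠ 0)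
    (hbd : ∃ C, ∀ y ∈ A ∪ B, |y| ≤ C)
    (h1 : (fun x => a + x) '' A ∪ (fun x => b + x) '' B ⊆ A ∪ B)
    (x0 : ℝ) (hx0 : x0 ∈ A) :
    (∀ M : ℕ, ∃ k : ℤ, x0 + (M : ℝ) * a + (k : ℝ) * b ∈ A) ∧
      (∀ M : ℕ, ∃ k : ℤ, x0 + (M : ℝ) * b + (k : ℝ) * a ∈ B) := by
  classical
  obtain ⟨C, hC⟩ := hbd
  set f : ℝ → ℝ := fun y => if y ∈ A then a + y else b + y with hf
  set x : ℕ → ℝ := fun n => f^[n] x0 with hxdef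
  have hxs : ∀ n, x (n + 1) = f (x n) := fun n => Function.iterate_succ_apply' f n x0
  have hx : ∀ n, x n ∈ A ∪ B := by
    intro n
    induction n with
    | zero => exact Or.inl hx0
    | succ k ih =>
      rw [hxs]
      by_cases hk : x k ∈ A
      · exact h1 (Or.inl ⟨x k, hk, by simp [hf, hk]⟩)
      · have hkB : x k ∈ B := ih.resolve_left hk
        exact h1 (Or.inr ⟨x k, hkB, by simp [hf, hk]⟩)
  set cA : ℕ → ℕ := fun n => ((Finset.range n).filter (fun i => x i ∈ A)).card with hcA
  set cB : ℕ → ℕ := fun n => ((Finset.range n).filter (fun i => x i ∉ A)).card with hcB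
  have hcA0 : cA 0 = 0 := by simp [hcA]
  have hcB0 : cB 0 = 0 := by simp [hcB]
  have hcAs : ∀ n, cA (n + 1) = cA n + (if x n ∈ A then 1 else 0) := by
    intro n
    simp only [hcA, Finset.range_add_one, Finset.filter_insert]
    by_cases hn : x n ∈ A
    · rw [if_pos hn, Finset.card_insert_of_notMem (by simp), if_pos hn]
    · rw [if_neg hn, if_neg hn, add_zero]
  have hcBs : ∀ n, cB (n + 1) = cB n + (if x n ∈ A then 0 else 1) := by
    intro n
    simp only [hcB, Finset.range_add_one, Finset.filter_insert]
    by_cases hn : x n ∈ A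
    · rw [if_neg (by simp [hn]), if_pos hn, add_zero]
    · rw [if_pos hn, Finset.card_insert_of_notMem (by simp), if_neg hn]
  have hform : ∀ n, x n = x0 + (cA n : ℝ) * a + (cB n : ℝ) * b := by
    intro n
    induction n with
    | zero => simp [hxdef, hcA0, hcB0]
    | succ k ih =>
      rw [hxs, hcAs, hcBs]
      by_cases hk : x k ∈ A
      · simp only [hf, if_pos hk]
        rw [ih]; push_cast; ring
      · simp only [hf, if_neg hk]
        rw [ih]; push_cast; ring
  -- infinitely many visits to A
  have hinfA : ∀ N : ℕ, ∃ t : ℕ, x (N + t) ∈ A := by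
    intro N
    by_contra hcon
    push_neg at hcon
    have htail : ∀ t : ℕ, x (N + t) = x N + (t : ℝ) * b := by
      intro t
      induction t with
      | zero => simp
      | succ k ih =>
        rw [show N + (k + 1) = (N + k) + 1 by ring, hxs, hf]
        simp only [if_neg (hcon k)]
        rw [ih]; push_cast; ring
    obtain ⟨t, ht⟩ := exists_nat_gt ((C + |x N|) / |b|)
    have hbpos : 0 < |b| := abs_pos.mpr hb
    have h2 : C + |x N| < (t : ℝ) * |b| := by
      rwa [div_lt_iff₀ hbpos] at ht
    have h3 : |x (N + t)| ≤ C := hC _ (hx _)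
    rw [htail t] at h3
    have h4 : (t : ℝ) * |b| - |x N| ≤ |x N + (t : ℝ) * b| := by
      have := abs_add_le (x N) ((t : ℝ) * b)
      have h5 : |(t : ℝ) * b| = (t : ℝ) * |b| := by
        rw [abs_mul, Nat.abs_cast]
      calc (t : ℝ) * |b| - |x N| = |(t:ℝ) * b| - |x N| := by rw [h5]
        _ ≤ |x N + (t : ℝ) * b| := by
            have := abs_sub_abs_le_abs_sub ((t:ℝ)*b) (-(x N))
            have h6 : (t:ℝ)*b - -(x N) = x N + (t:ℝ)*b := by ring
            rw [h6] at this
            simpa using this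
    linarith
  have hinfB : ∀ N : ℕ, ∃ t : ℕ, x (N + t) ∉ A := by
    intro N
    by_contra hcon
    push_neg at hcon
    have htail : ∀ t : ℕ, x (N + t) = x N + (t : ℝ) * a := by
      intro t
      induction t with
      | zero => simp
      | succ k ih =>
        rw [show N + (k + 1) = (N + k) + 1 by ring, hxs, hf]
        simp only [if_pos (hcon k)]
        rw [ih]; push_cast; ring
    obtain ⟨t, ht⟩ := exists_nat_gt ((C + |x N|) / |a|)
    have hapos : 0 < |a| := abs_pos.mpr ha
    have h2 : C + |x N| < (t : ℝ) * |a| := by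
      rwa [div_lt_iff₀ hapos] at ht
    have h3 : |x (N + t)| ≤ C := hC _ (hx _)
    rw [htail t] at h3
    have h4 : (t : ℝ) * |a| - |x N| ≤ |x N + (t : ℝ) * a| := by
      have h5 : |(t : ℝ) * a| = (t : ℝ) * |a| := by
        rw [abs_mul, Nat.abs_cast]
      have := abs_sub_abs_le_abs_sub ((t:ℝ)*a) (-(x N))
      have h6 : (t:ℝ)*a - -(x N) = x N + (t:ℝ)*a := by ring
      rw [h6] at this
      rw [← h5]
      simpa using this
    linarith
  constructor
  · intro M
    obtain ⟨n, hpn, hcn⟩ := counter_lemma' cA (fun n => x n ∈ A) hcA0 hcAs hinfA M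
    refine ⟨(cB n : ℤ), ?_⟩
    have hfn := hform n
    rw [hcn] at hfn
    have heq : x0 + (M : ℝ) * a + ((cB n : ℤ) : ℝ) * b = x n := by
      rw [hfn]; push_cast; ring
    rwa [heq]
  · intro M
    obtain ⟨n, hpn, hcn⟩ := counter_lemma' cB (fun n => x n ∉ A)
      hcB0 (by intro n; rw [hcBs]; by_cases h : x n ∈ A <;> simp [h]) hinfB M
    refine ⟨(cA n : ℤ), ?_⟩
    have hBn : x n ∈ B := (hx n).resolve_left hpn
    have hfn := hform n
    rw [hcn] at hfn
    have : x0 + (M : ℝ) * b + ((cA n : ℤ) : ℝ) * a = x n := by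
      rw [hfn]; push_cast; ring
    rwa [this]

theorem stmt_19 (A B : Set ℝ) (hAne : A.Nonempty) (hBne : B.Nonempty)
    (hA : IsCompact A) (hB : IsCompact B) (a b : ℝ) (ha : a ≠ 0) (hb : b ≠ 0)
    (hirr : Irrational (a / b))
    (h1 : (fun x => a + x) '' A ∪ (fun x => b + x) '' B ⊆ A ∪ B) :
    0 < MeasureTheory.volume A ∧ 0 < MeasureTheory.volume B := by
  obtain ⟨x0, hx0⟩ := hAne
  have hbd : ∃ C, ∀ y ∈ A ∪ B, |y| ≤ C := by
    obtain ⟨C, hC⟩ := (hA.union hB).isBounded.exists_norm_le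
    exact ⟨C, fun y hy => hC y hy⟩
  obtain ⟨hptsA, hptsB⟩ := orbit_pts' A B a b ha hb hbd h1 x0 hx0
  have hirr' : Irrational (b / a) := by
    rw [← inv_div]
    exact hirr.inv
  exact ⟨key_measure' A hA a b x0 hb hirr hptsA,
    key_measure' B hB b a x0 ha hirr' hptsB⟩
end
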